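/- arXiv:math-ph/0408031 — 5 statements merged into one kernel-verified Lean document; each statement's English description precedes it below -/
import Mathlib

section
/- Let ⟨·⟩ be moments with truncated moments ⟨·⟩^T defined by the moment-cumulant recursion. Suppose ⟨·⟩^T satisfies the exponential clustering bound |⟨X ∪ Y⟩^T| ≤ D'(|X|,|Y|) exp(-m₀ d(X,Y)) for disjoint X, Y, where d(X,Y) is the minimal distance between the point configurations indexed by X and Y. Then the moments satisfy |⟨X ∪ Y⟩ - ⟨X⟩⟨Y⟩| ≤ D(|X|,|Y|) exp(-m₀ d(X,Y)) for some constants D depending only on |X| and |Y|. Conversely, exponential clustering of the moments implies exponential clustering of the truncated moments. -/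
open scoped BigOperators

/-- The finset of all partitions of a finite set `J`. -/
def partitionsOf {α : Type*} [DecidableEq α] (J : Finset α) : Finset (Finset (Finset α)) :=
  J.powerset.powerset.filter
    (fun P => ∅ ∉ P ∧ (∀ a ∈ P, ∀ b ∈ P, a ≠ b → a ∩ b = ∅) ∧ P.biUnion id = J)

/-- Minimal distance between the point configurations indexed by `X` and `Y`. -/
noncomputable def minDist {d : ℕ} (x : ℕ → EuclideanSpace ℝ (Fin d))
    (X Y : Finset ℕ) : ℝ :=
  sInf {r | ∃ j ∈ X, ∃ l ∈ Y, r = dist (x j) (x l)}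



namespace PofAux

variable {α : Type*} [DecidableEq α]

lemma mem_pof {J : Finset α} {P : Finset (Finset α)} :
    P ∈ partitionsOf J ↔ (∀ b ∈ P, b ⊆ J) ∧ ∅ ∉ P ∧
      (∀ a ∈ P, ∀ b ∈ P, a ≠ b → a ∩ b = ∅) ∧ P.biUnion id = J := by
  simp [partitionsOf, Finset.mem_filter, Finset.mem_powerset, Finset.subset_iff,
    and_assoc]

lemma block_subset {J : Finset α} {P : Finset (Finset α)} (hP : P ∈ partitionsOf J)
    {b : Finset α} (hb : b ∈ P) : b ⊆ J := (mem_pof.1 hP).1 b hb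

lemma block_nonempty {J : Finset α} {P : Finset (Finset α)} (hP : P ∈ partitionsOf J)
    {b : Finset α} (hb : b ∈ P) : b.Nonempty := by
  rcases Finset.eq_empty_or_nonempty b with h | h
  · exact absurd (h ▸ hb) (mem_pof.1 hP).2.1
  · exact h

lemma exists_block {J : Finset α} {P : Finset (Finset α)} (hP : P ∈ partitionsOf J)
    {a : α} (ha : a ∈ J) : ∃ b ∈ P, a ∈ b := by
  have := (mem_pof.1 hP).2.2.2
  rw [← this] at ha
  simpa using ha

lemma top_mem_pof {J : Finset α} (hJ : J.Nonempty) : {J} ∈ partitionsOf J := by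
  rw [mem_pof]
  refine ⟨by simp, ?_, by simp, by simp⟩
  simp only [Finset.mem_singleton]
  intro h
  exact hJ.ne_empty h.symm

lemma card_pof_le (J : Finset α) : (partitionsOf J).card ≤ 2 ^ 2 ^ J.card := by
  calc (partitionsOf J).card ≤ J.powerset.powerset.card := Finset.card_filter_le _ _
    _ = 2 ^ 2 ^ J.card := by simp

lemma card_block_le {J : Finset α} {P : Finset (Finset α)} (hP : P ∈ partitionsOf J) :
    P.card ≤ 2 ^ J.card := by
  have : P ⊆ J.powerset := fun b hb => Finset.mem_powerset.2 (block_subset hP hb)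
  calc P.card ≤ J.powerset.card := Finset.card_le_card this
    _ = 2 ^ J.card := by simp

lemma pof_singleton (j : α) : partitionsOf ({j} : Finset α) = {{{j}}} := by
  ext P
  rw [mem_pof]
  constructor
  · rintro ⟨hsub, hne, -, hcov⟩
    simp only [Finset.mem_singleton]
    apply Finset.Subset.antisymm
    · intro b hb
      have h1 : b ⊆ {j} := hsub b hb
      have h2 : b.Nonempty := by
        rcases Finset.eq_empty_or_nonempty b with h | h
        · exact absurd (h ▸ hb) hne
        · exact h
      have : b = {j} := Finset.Subset.antisymm h1 (by
        rcases h2 with ⟨a, ha⟩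
        have := h1 ha
        simp only [Finset.mem_singleton] at this
        subst this
        simpa using ha)
      simp [this]
    · intro b hb
      simp only [Finset.mem_singleton] at hb
      subst hb
      have : j ∈ P.biUnion id := by rw [hcov]; simp
      simp only [Finset.mem_biUnion, id] at this
      obtain ⟨c, hc, hjc⟩ := this
      have : c = {j} := Finset.Subset.antisymm (hsub c hc) (by
        intro a ha; simp only [Finset.mem_singleton] at ha; subst ha; exact hjc)
      exact this ▸ hc
  · rintro h
    simp only [Finset.mem_singleton] at h
    subst h
    refine ⟨by simp, by simp only [Finset.mem_singleton]; exact fun h => Finset.singleton_ne_empty j h.symm, by simp, by simp⟩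


end PofAux
namespace PofAux

variable {α : Type*} [DecidableEq α]

lemma filter_mem_pof_left {X Y : Finset α} (hXY : X ∩ Y = ∅)
    {P : Finset (Finset α)} (hP : P ∈ partitionsOf (X ∪ Y))
    (hall : ∀ b ∈ P, b ⊆ X ∨ b ⊆ Y) :
    P.filter (fun b => b ⊆ X) ∈ partitionsOf X := by
  obtain ⟨hsub, hne, hdisj, hcov⟩ := mem_pof.1 hP
  rw [mem_pof]
  refine ⟨fun b hb => (Finset.mem_filter.1 hb).2,
    fun h => hne (Finset.mem_filter.1 h).1,
    fun a ha b hb hab => hdisj a (Finset.mem_filter.1 ha).1 b (Finset.mem_filter.1 hb).1 hab,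
    ?_⟩
  apply Finset.Subset.antisymm
  · intro a ha
    simp only [Finset.mem_biUnion, Finset.mem_filter, id] at ha
    obtain ⟨b, ⟨-, hbX⟩, hab⟩ := ha
    exact hbX hab
  · intro a ha
    obtain ⟨b, hb, hab⟩ := exists_block hP (Finset.mem_union_left _ ha)
    have hbX : b ⊆ X := by
      rcases hall b hb with h | h
      · exact h
      · exact absurd (Finset.mem_inter.2 ⟨ha, h hab⟩) (by simp [hXY])
    simp only [Finset.mem_biUnion, Finset.mem_filter, id]
    exact ⟨b, ⟨hb, hbX⟩, hab⟩

lemma filter_mem_pof_right {X Y : Finset α} (hXY : X ∩ Y = ∅)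
    {P : Finset (Finset α)} (hP : P ∈ partitionsOf (X ∪ Y))
    (hall : ∀ b ∈ P, b ⊆ X ∨ b ⊆ Y) :
    P.filter (fun b => ¬ b ⊆ X) ∈ partitionsOf Y := by
  obtain ⟨hsub, hne, hdisj, hcov⟩ := mem_pof.1 hP
  rw [mem_pof]
  refine ⟨?_,
    fun h => hne (Finset.mem_filter.1 h).1,
    fun a ha b hb hab => hdisj a (Finset.mem_filter.1 ha).1 b (Finset.mem_filter.1 hb).1 hab,
    ?_⟩
  · intro b hb
    rcases hall b (Finset.mem_filter.1 hb).1 with h | h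
    · exact absurd h (Finset.mem_filter.1 hb).2
    · exact h
  apply Finset.Subset.antisymm
  · intro a ha
    simp only [Finset.mem_biUnion, Finset.mem_filter, id] at ha
    obtain ⟨b, ⟨hbP, hbX⟩, hab⟩ := ha
    rcases hall b hbP with h | h
    · exact absurd h hbX
    · exact h hab
  · intro a ha
    obtain ⟨b, hb, hab⟩ := exists_block hP (Finset.mem_union_right _ ha)
    have hbX : ¬ b ⊆ X := by
      intro h
      exact absurd (Finset.mem_inter.2 ⟨h hab, ha⟩) (by simp [hXY])
    simp only [Finset.mem_biUnion, Finset.mem_filter, id]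
    exact ⟨b, ⟨hb, hbX⟩, hab⟩

lemma union_mem_pof {X Y : Finset α} (hXY : X ∩ Y = ∅)
    {P₁ P₂ : Finset (Finset α)} (h1 : P₁ ∈ partitionsOf X) (h2 : P₂ ∈ partitionsOf Y) :
    P₁ ∪ P₂ ∈ partitionsOf (X ∪ Y) := by
  obtain ⟨hsub1, hne1, hdisj1, hcov1⟩ := mem_pof.1 h1
  obtain ⟨hsub2, hne2, hdisj2, hcov2⟩ := mem_pof.1 h2
  rw [mem_pof]
  refine ⟨?_, ?_, ?_, ?_⟩
  · intro b hb
    rcases Finset.mem_union.1 hb with h | h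
    · exact (hsub1 b h).trans Finset.subset_union_left
    · exact (hsub2 b h).trans Finset.subset_union_right
  · intro h
    rcases Finset.mem_union.1 h with h | h
    · exact hne1 h
    · exact hne2 h
  · intro a ha b hb hab
    rcases Finset.mem_union.1 ha with ha' | ha' <;> rcases Finset.mem_union.1 hb with hb' | hb'
    · exact hdisj1 a ha' b hb' hab
    · exact Finset.subset_empty.1 (hXY ▸ Finset.inter_subset_inter (hsub1 a ha') (hsub2 b hb'))
    · rw [Finset.inter_comm]
      exact Finset.subset_empty.1 (hXY ▸ Finset.inter_subset_inter (hsub1 b hb') (hsub2 a ha'))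
    · exact hdisj2 a ha' b hb' hab
  · rw [← hcov1, ← hcov2]
    ext a
    simp [Finset.mem_biUnion, Finset.mem_union, or_and_right, exists_or]

lemma disjoint_parts {X Y : Finset α} (hXY : X ∩ Y = ∅)
    {P₁ P₂ : Finset (Finset α)} (h1 : P₁ ∈ partitionsOf X) (h2 : P₂ ∈ partitionsOf Y) :
    Disjoint P₁ P₂ := by
  rw [Finset.disjoint_left]
  intro b hb1 hb2
  have hbX := block_subset h1 hb1
  have hbY := block_subset h2 hb2
  obtain ⟨a, ha⟩ := block_nonempty h1 hb1
  exact absurd (Finset.mem_inter.2 ⟨hbX ha, hbY ha⟩) (by simp [hXY])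

lemma sum_split (X Y : Finset α) (hXY : X ∩ Y = ∅) (T : Finset α → ℝ) :
    ∑ P ∈ (partitionsOf (X ∪ Y)).filter (fun P => ∀ b ∈ P, b ⊆ X ∨ b ⊆ Y),
        ∏ b ∈ P, T b
      = (∑ P ∈ partitionsOf X, ∏ b ∈ P, T b) * (∑ P ∈ partitionsOf Y, ∏ b ∈ P, T b) := by
  rw [Finset.sum_mul_sum, ← Finset.sum_product']
  refine Finset.sum_nbij' (fun P => (P.filter (fun b => b ⊆ X), P.filter (fun b => ¬ b ⊆ X)))
    (fun p => p.1 ∪ p.2) ?_ ?_ ?_ ?_ ?_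
  · intro P hP
    obtain ⟨hP, hall⟩ := Finset.mem_filter.1 hP
    exact Finset.mem_product.2 ⟨filter_mem_pof_left hXY hP hall, filter_mem_pof_right hXY hP hall⟩
  · intro p hp
    obtain ⟨h1, h2⟩ := Finset.mem_product.1 hp
    refine Finset.mem_filter.2 ⟨union_mem_pof hXY h1 h2, ?_⟩
    intro b hb
    rcases Finset.mem_union.1 hb with h | h
    · exact Or.inl (block_subset h1 h)
    · exact Or.inr (block_subset h2 h)
  · intro P hP
    exact Finset.filter_union_filter_not_eq _ P
  · intro p hp
    obtain ⟨h1, h2⟩ := Finset.mem_product.1 hp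
    have hd := disjoint_parts hXY h1 h2
    have e1 : (p.1 ∪ p.2).filter (fun b => b ⊆ X) = p.1 := by
      apply Finset.Subset.antisymm
      · intro b hb
        obtain ⟨hb, hbX⟩ := Finset.mem_filter.1 hb
        rcases Finset.mem_union.1 hb with h | h
        · exact h
        · obtain ⟨a, ha⟩ := block_nonempty h2 h
          exact absurd (Finset.mem_inter.2 ⟨hbX ha, block_subset h2 h ha⟩) (by simp [hXY])
      · intro b hb
        exact Finset.mem_filter.2 ⟨Finset.mem_union_left _ hb, block_subset h1 hb⟩
    have e2 : (p.1 ∪ p.2).filter (fun b => ¬ b ⊆ X) = p.2 := by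
      apply Finset.Subset.antisymm
      · intro b hb
        obtain ⟨hb, hbX⟩ := Finset.mem_filter.1 hb
        rcases Finset.mem_union.1 hb with h | h
        · exact absurd (block_subset h1 h) hbX
        · exact h
      · intro b hb
        refine Finset.mem_filter.2 ⟨Finset.mem_union_right _ hb, ?_⟩
        intro hbX
        obtain ⟨a, ha⟩ := block_nonempty h2 hb
        exact absurd (Finset.mem_inter.2 ⟨hbX ha, block_subset h2 hb ha⟩) (by simp [hXY])
    rw [e1, e2]
  · intro P hP
    obtain ⟨hP, hall⟩ := Finset.mem_filter.1 hP
    have hd : Disjoint (P.filter (fun b => b ⊆ X)) (P.filter (fun b => ¬ b ⊆ X)) :=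
      Finset.disjoint_filter_filter_not P P _
    rw [← Finset.prod_union hd, Finset.filter_union_filter_not_eq]

end PofAux

namespace PofAux

lemma key_identity (m T : Finset ℕ → ℝ)
    (hT : ∀ J : Finset ℕ, J.Nonempty → m J = ∑ P ∈ partitionsOf J, ∏ b ∈ P, T b)
    (X Y : Finset ℕ) (hX : X.Nonempty) (hY : Y.Nonempty) (hXY : X ∩ Y = ∅) :
    m (X ∪ Y) - m X * m Y
      = ∑ P ∈ (partitionsOf (X ∪ Y)).filter (fun P => ¬ ∀ b ∈ P, b ⊆ X ∨ b ⊆ Y),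
          ∏ b ∈ P, T b := by
  have h1 := hT (X ∪ Y) (hX.mono Finset.subset_union_left)
  have h2 := hT X hX
  have h3 := hT Y hY
  rw [h1, h2, h3, ← sum_split X Y hXY T,
    ← Finset.sum_filter_add_sum_filter_not (partitionsOf (X ∪ Y))
      (fun P => ∀ b ∈ P, b ⊆ X ∨ b ⊆ Y) (fun P => ∏ b ∈ P, T b)]
  ring

lemma T_rec (m T : Finset ℕ → ℝ)
    (hT : ∀ J : Finset ℕ, J.Nonempty → m J = ∑ P ∈ partitionsOf J, ∏ b ∈ P, T b)
    (J : Finset ℕ) (hJ : J.Nonempty) :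
    T J = m J - ∑ P ∈ (partitionsOf J).erase {J}, ∏ b ∈ P, T b := by
  have h := hT J hJ
  rw [← Finset.add_sum_erase _ _ (top_mem_pof hJ)] at h
  simp only [Finset.prod_singleton] at h
  linarith

lemma minDist_nonneg {d : ℕ} (x : ℕ → EuclideanSpace ℝ (Fin d)) (X Y : Finset ℕ) :
    0 ≤ minDist x X Y := by
  apply Real.sInf_nonneg
  rintro r ⟨j, hj, l, hl, rfl⟩
  exact dist_nonneg

lemma minDist_mono {d : ℕ} (x : ℕ → EuclideanSpace ℝ (Fin d)) {A B X Y : Finset ℕ}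
    (hA : A.Nonempty) (hB : B.Nonempty) (hAX : A ⊆ X) (hBY : B ⊆ Y) :
    minDist x X Y ≤ minDist x A B := by
  apply csInf_le_csInf
  · exact ⟨0, by rintro r ⟨j, hj, l, hl, rfl⟩; exact dist_nonneg⟩
  · obtain ⟨a, ha⟩ := hA
    obtain ⟨b, hb⟩ := hB
    exact ⟨dist (x a) (x b), a, ha, b, hb, rfl⟩
  · rintro r ⟨j, hj, l, hl, rfl⟩
    exact ⟨j, hAX hj, l, hBY hl, rfl⟩

lemma exp_mono_dist {d : ℕ} (x : ℕ → EuclideanSpace ℝ (Fin d)) {m₀ : ℝ} (hm₀ : 0 < m₀)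
    {A B X Y : Finset ℕ} (hA : A.Nonempty) (hB : B.Nonempty) (hAX : A ⊆ X) (hBY : B ⊆ Y) :
    Real.exp (-m₀ * minDist x A B) ≤ Real.exp (-m₀ * minDist x X Y) := by
  apply Real.exp_le_exp.2
  have := minDist_mono x hA hB hAX hBY
  nlinarith

lemma exp_le_one {d : ℕ} (x : ℕ → EuclideanSpace ℝ (Fin d)) {m₀ : ℝ} (hm₀ : 0 < m₀)
    (X Y : Finset ℕ) : Real.exp (-m₀ * minDist x X Y) ≤ 1 := by
  rw [Real.exp_le_one_iff]
  have := minDist_nonneg x X Y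
  nlinarith

end PofAux
namespace PofAux

lemma prod_le_pow {Q : Finset (Finset ℕ)} {f : Finset ℕ → ℝ} {C : ℝ} (hC : 1 ≤ C)
    (h : ∀ b ∈ Q, |f b| ≤ C) {N : ℕ} (hN : Q.card ≤ N) : ∏ b ∈ Q, |f b| ≤ C ^ N := by
  calc ∏ b ∈ Q, |f b| ≤ ∏ _b ∈ Q, C := Finset.prod_le_prod (fun b _ => abs_nonneg _) h
    _ = C ^ Q.card := Finset.prod_const C
    _ ≤ C ^ N := pow_le_pow_right₀ (by linarith) hN

lemma mem_top_block {J : Finset ℕ} {P : Finset (Finset ℕ)} (hP : P ∈ partitionsOf J)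
    (hJ : J ∈ P) : P = {J} := by
  apply Finset.Subset.antisymm
  · intro b hb
    simp only [Finset.mem_singleton]
    by_contra hbJ
    have hd := (mem_pof.1 hP).2.2.1 b hb J hJ hbJ
    obtain ⟨a, ha⟩ := block_nonempty hP hb
    have : a ∈ b ∩ J := Finset.mem_inter.2 ⟨ha, block_subset hP hb ha⟩
    rw [hd] at this
    simp at this
  · intro b hb
    simp only [Finset.mem_singleton] at hb
    exact hb ▸ hJ

lemma T_singleton (m T : Finset ℕ → ℝ)
    (hT : ∀ J : Finset ℕ, J.Nonempty → m J = ∑ P ∈ partitionsOf J, ∏ b ∈ P, T b)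
    (j : ℕ) : T {j} = m {j} := by
  have h := hT {j} (Finset.singleton_nonempty j)
  rw [pof_singleton] at h
  simp at h
  exact h.symm

lemma forward_dir {d : ℕ} (x : ℕ → EuclideanSpace ℝ (Fin d)) {m₀ : ℝ} (hm₀ : 0 < m₀)
    (m T : Finset ℕ → ℝ)
    (hT : ∀ J : Finset ℕ, J.Nonempty → m J = ∑ P ∈ partitionsOf J, ∏ b ∈ P, T b)
    {K : ℝ} (hK : ∀ j : ℕ, |m {j}| ≤ K)
    {D' : ℕ → ℕ → ℝ}
    (hD' : ∀ X Y : Finset ℕ, X.Nonempty → Y.Nonempty → X ∩ Y = ∅ →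
      |T (X ∪ Y)| ≤ D' X.card Y.card * Real.exp (-m₀ * minDist x X Y)) :
    ∃ D : ℕ → ℕ → ℝ, ∀ X Y : Finset ℕ, X.Nonempty → Y.Nonempty → X ∩ Y = ∅ →
      |m (X ∪ Y) - m X * m Y| ≤ D X.card Y.card * Real.exp (-m₀ * minDist x X Y) := by
  have hTone : ∀ j : ℕ, |T {j}| ≤ K := fun j => (T_singleton m T hT j) ▸ hK j
  set C : ℕ → ℝ := fun s => max K 1 + ∑ i ∈ Finset.range s, max (D' 1 i) 1 with hCdef
  have hC1 : ∀ s, 1 ≤ C s := by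
    intro s
    have h1 : (0:ℝ) ≤ ∑ i ∈ Finset.range s, max (D' 1 i) 1 :=
      Finset.sum_nonneg fun i _ => le_trans zero_le_one (le_max_right _ _)
    have h2 : (1:ℝ) ≤ max K 1 := le_max_right _ _
    simp only [hCdef]
    linarith
  have hCmono : ∀ s t, s ≤ t → C s ≤ C t := by
    intro s t hst
    simp only [hCdef]
    have := Finset.sum_le_sum_of_subset_of_nonneg
      (Finset.range_subset_range.2 hst)
      (fun i _ _ => le_trans zero_le_one (le_max_right (D' 1 i) 1))
    linarith
  have hCT : ∀ S : Finset ℕ, S.Nonempty → |T S| ≤ C S.card := by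
    intro S hS
    obtain ⟨j, hj⟩ := hS
    by_cases he : S.erase j = ∅
    · have hSj : S = {j} := by
        rcases (Finset.erase_eq_empty_iff S j).1 he with h | h
        · exact absurd (h ▸ hj) (Finset.notMem_empty j)
        · exact h
      subst hSj
      calc |T {j}| ≤ K := hTone j
        _ ≤ max K 1 := le_max_left _ _
        _ ≤ C (Finset.card {j}) := by
            have := hC1 0
            simp only [hCdef]
            have : (0:ℝ) ≤ ∑ i ∈ Finset.range (Finset.card {j}), max (D' 1 i) 1 :=
              Finset.sum_nonneg fun i _ => le_trans zero_le_one (le_max_right _ _)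
            linarith
    · have hS' : (S.erase j).Nonempty := Finset.nonempty_of_ne_empty he
      have hsplit : ({j} : Finset ℕ) ∪ S.erase j = S := by
        rw [← Finset.insert_eq, Finset.insert_erase hj]
      have hdisj : ({j} : Finset ℕ) ∩ S.erase j = ∅ :=
        Finset.singleton_inter_of_notMem (Finset.notMem_erase j S)
      have hb := hD' {j} (S.erase j) (Finset.singleton_nonempty j) hS' hdisj
      rw [hsplit] at hb
      have hexp1 : Real.exp (-m₀ * minDist x {j} (S.erase j)) ≤ 1 := exp_le_one x hm₀ _ _
      have hexp0 : (0:ℝ) < Real.exp (-m₀ * minDist x {j} (S.erase j)) := Real.exp_pos _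
      have hcard : S.card = (S.erase j).card + 1 := (Finset.card_erase_add_one hj).symm
      calc |T S| ≤ D' 1 (S.erase j).card * Real.exp (-m₀ * minDist x {j} (S.erase j)) := by
            simpa using hb
        _ ≤ max (D' 1 (S.erase j).card) 1 * Real.exp (-m₀ * minDist x {j} (S.erase j)) := by
            apply mul_le_mul_of_nonneg_right (le_max_left _ _) hexp0.le
        _ ≤ max (D' 1 (S.erase j).card) 1 * 1 := by
            apply mul_le_mul_of_nonneg_left hexp1
            exact le_trans zero_le_one (le_max_right _ _)
        _ ≤ ∑ i ∈ Finset.range S.card, max (D' 1 i) 1 := by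
            rw [mul_one]
            apply Finset.single_le_sum (f := fun i => max (D' 1 i) 1)
              (fun i _ => le_trans zero_le_one (le_max_right _ _))
            rw [Finset.mem_range, hcard]
            omega
        _ ≤ C S.card := by
            simp only [hCdef]
            have : (0:ℝ) ≤ max K 1 := le_trans zero_le_one (le_max_right _ _)
            linarith
  set Mf : ℕ → ℕ → ℝ := fun n k =>
    ∑ p ∈ Finset.range (n+1) ×ˢ Finset.range (k+1), max (D' p.1 p.2) 0 with hMfdef
  have hMf0 : ∀ n k, 0 ≤ Mf n k := fun n k =>
    Finset.sum_nonneg fun p _ => le_max_right _ _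
  have hMf : ∀ n k a c, a ≤ n → c ≤ k → max (D' a c) 0 ≤ Mf n k := by
    intro n k a c ha hc
    simp only [hMfdef]
    exact Finset.single_le_sum (f := fun p : ℕ × ℕ => max (D' p.1 p.2) 0)
      (fun p _ => le_max_right _ _) (a := (a, c))
      (by rw [Finset.mem_product, Finset.mem_range, Finset.mem_range]; omega)
  refine ⟨fun n k => 2^(2^(n+k)) * (C (n+k))^(2^(n+k)) * Mf n k, ?_⟩
  intro X Y hX hY hXY
  simp only []
  have hdXY : Disjoint X Y := Finset.disjoint_iff_inter_eq_empty.2 hXY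
  set s := X.card + Y.card with hsdef
  have hcard : (X ∪ Y).card = s := Finset.card_union_of_disjoint hdXY
  rw [key_identity m T hT X Y hX hY hXY]
  have hexps : (0:ℝ) < Real.exp (-m₀ * minDist x X Y) := Real.exp_pos _
  have hbound : ∀ P ∈ (partitionsOf (X ∪ Y)).filter (fun P => ¬ ∀ b ∈ P, b ⊆ X ∨ b ⊆ Y),
      |∏ b ∈ P, T b| ≤ Mf X.card Y.card * Real.exp (-m₀ * minDist x X Y) * (C s)^(2^s) := by
    intro P hPf
    obtain ⟨hP, hconn⟩ := Finset.mem_filter.1 hPf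
    push_neg at hconn
    obtain ⟨b₀, hb₀P, hb₀X, hb₀Y⟩ := hconn
    have hb₀sub : b₀ ⊆ X ∪ Y := block_subset hP hb₀P
    have hbXne : (b₀ ∩ X).Nonempty := by
      obtain ⟨a, ha, haY⟩ := Finset.not_subset.1 hb₀Y
      have : a ∈ X ∪ Y := hb₀sub ha
      rcases Finset.mem_union.1 this with h | h
      · exact ⟨a, Finset.mem_inter.2 ⟨ha, h⟩⟩
      · exact absurd h haY
    have hbYne : (b₀ ∩ Y).Nonempty := by
      obtain ⟨a, ha, haX⟩ := Finset.not_subset.1 hb₀X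
      have : a ∈ X ∪ Y := hb₀sub ha
      rcases Finset.mem_union.1 this with h | h
      · exact absurd h haX
      · exact ⟨a, Finset.mem_inter.2 ⟨ha, h⟩⟩
    have heq : (b₀ ∩ X) ∪ (b₀ ∩ Y) = b₀ := by
      rw [← Finset.inter_union_distrib_left]
      exact Finset.inter_eq_left.2 hb₀sub
    have hdis : (b₀ ∩ X) ∩ (b₀ ∩ Y) = ∅ := by
      apply Finset.subset_empty.1
      rw [← hXY]
      exact Finset.inter_subset_inter Finset.inter_subset_right Finset.inter_subset_right
    have hTb₀ : |T b₀| ≤ Mf X.card Y.card * Real.exp (-m₀ * minDist x X Y) := by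
      have h1 := hD' (b₀ ∩ X) (b₀ ∩ Y) hbXne hbYne hdis
      rw [heq] at h1
      have hexp0 : (0:ℝ) < Real.exp (-m₀ * minDist x (b₀ ∩ X) (b₀ ∩ Y)) := Real.exp_pos _
      calc |T b₀| ≤ D' (b₀ ∩ X).card (b₀ ∩ Y).card
            * Real.exp (-m₀ * minDist x (b₀ ∩ X) (b₀ ∩ Y)) := h1
        _ ≤ max (D' (b₀ ∩ X).card (b₀ ∩ Y).card) 0
            * Real.exp (-m₀ * minDist x (b₀ ∩ X) (b₀ ∩ Y)) :=
            mul_le_mul_of_nonneg_right (le_max_left _ _) hexp0.le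
        _ ≤ Mf X.card Y.card * Real.exp (-m₀ * minDist x X Y) := by
            apply mul_le_mul
            · exact hMf _ _ _ _ (Finset.card_le_card Finset.inter_subset_right)
                (Finset.card_le_card Finset.inter_subset_right)
            · exact exp_mono_dist x hm₀ hbXne hbYne Finset.inter_subset_right
                Finset.inter_subset_right
            · exact hexp0.le
            · exact hMf0 _ _
    have hprodrest : ∏ b ∈ P.erase b₀, |T b| ≤ (C s)^(2^s) := by
      apply prod_le_pow (hC1 s)
      · intro b hb
        have hbP : b ∈ P := Finset.mem_of_mem_erase hb
        calc |T b| ≤ C b.card := hCT b (block_nonempty hP hbP)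
          _ ≤ C s := hCmono _ _ (hcard ▸ Finset.card_le_card (block_subset hP hbP))
      · calc (P.erase b₀).card ≤ P.card := Finset.card_le_card (Finset.erase_subset _ _)
          _ ≤ 2 ^ (X ∪ Y).card := card_block_le hP
          _ = 2 ^ s := by rw [hcard]
    calc |∏ b ∈ P, T b| = ∏ b ∈ P, |T b| := Finset.abs_prod _ _
      _ = |T b₀| * ∏ b ∈ P.erase b₀, |T b| := (Finset.mul_prod_erase P _ hb₀P).symm
      _ ≤ (Mf X.card Y.card * Real.exp (-m₀ * minDist x X Y)) * (C s)^(2^s) := by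
          apply mul_le_mul hTb₀ hprodrest
            (Finset.prod_nonneg fun b _ => abs_nonneg _)
            (mul_nonneg (hMf0 _ _) hexps.le)
      _ = Mf X.card Y.card * Real.exp (-m₀ * minDist x X Y) * (C s)^(2^s) := by ring
  calc |∑ P ∈ (partitionsOf (X ∪ Y)).filter (fun P => ¬ ∀ b ∈ P, b ⊆ X ∨ b ⊆ Y),
        ∏ b ∈ P, T b|
      ≤ ∑ P ∈ (partitionsOf (X ∪ Y)).filter (fun P => ¬ ∀ b ∈ P, b ⊆ X ∨ b ⊆ Y),
        |∏ b ∈ P, T b| := Finset.abs_sum_le_sum_abs _ _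
    _ ≤ ((partitionsOf (X ∪ Y)).filter (fun P => ¬ ∀ b ∈ P, b ⊆ X ∨ b ⊆ Y)).card
        • (Mf X.card Y.card * Real.exp (-m₀ * minDist x X Y) * (C s)^(2^s)) :=
        Finset.sum_le_card_nsmul _ _ _ hbound
    _ ≤ (2:ℝ)^(2^s) * (Mf X.card Y.card * Real.exp (-m₀ * minDist x X Y) * (C s)^(2^s)) := by
        rw [nsmul_eq_mul]
        apply mul_le_mul_of_nonneg_right
        · have h1 : ((partitionsOf (X ∪ Y)).filter
              (fun P => ¬ ∀ b ∈ P, b ⊆ X ∨ b ⊆ Y)).card ≤ 2^(2^s) := by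
            calc _ ≤ (partitionsOf (X ∪ Y)).card := Finset.card_filter_le _ _
              _ ≤ 2^(2^(X ∪ Y).card) := card_pof_le _
              _ = 2^(2^s) := by rw [hcard]
          calc (((partitionsOf (X ∪ Y)).filter
              (fun P => ¬ ∀ b ∈ P, b ⊆ X ∨ b ⊆ Y)).card : ℝ)
              ≤ ((2^(2^s) : ℕ) : ℝ) := Nat.cast_le.2 h1
            _ = (2:ℝ)^(2^s) := by push_cast; ring
        · apply mul_nonneg (mul_nonneg (hMf0 _ _) hexps.le)
          exact pow_nonneg (le_trans zero_le_one (hC1 s)) _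
    _ = 2^(2^(X.card + Y.card)) * (C (X.card + Y.card))^(2^(X.card + Y.card))
        * Mf X.card Y.card * Real.exp (-m₀ * minDist x X Y) := by
        rw [hsdef]
        ring

end PofAux
namespace PofAux

lemma block_ne_top {J : Finset ℕ} {P : Finset (Finset ℕ)} (hP : P ∈ partitionsOf J)
    (hPne : P ≠ {J}) {b : Finset ℕ} (hb : b ∈ P) : b ⊂ J := by
  refine Finset.ssubset_iff_subset_ne.2 ⟨block_subset hP hb, ?_⟩
  intro h
  exact hPne (mem_top_block hP (h ▸ hb))

lemma reverse_dir {d : ℕ} (x : ℕ → EuclideanSpace ℝ (Fin d)) {m₀ : ℝ} (hm₀ : 0 < m₀)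
    (m T : Finset ℕ → ℝ)
    (hT : ∀ J : Finset ℕ, J.Nonempty → m J = ∑ P ∈ partitionsOf J, ∏ b ∈ P, T b)
    {K : ℝ} (hK : ∀ j : ℕ, |m {j}| ≤ K)
    {D : ℕ → ℕ → ℝ}
    (hD : ∀ X Y : Finset ℕ, X.Nonempty → Y.Nonempty → X ∩ Y = ∅ →
      |m (X ∪ Y) - m X * m Y| ≤ D X.card Y.card * Real.exp (-m₀ * minDist x X Y)) :
    ∃ D' : ℕ → ℕ → ℝ, ∀ X Y : Finset ℕ, X.Nonempty → Y.Nonempty → X ∩ Y = ∅ →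
      |T (X ∪ Y)| ≤ D' X.card Y.card * Real.exp (-m₀ * minDist x X Y) := by
  have hK0 : (0:ℝ) ≤ K := le_trans (abs_nonneg _) (hK 0)
  -- bound on |m S| in terms of cardinality
  set MD1 : ℕ → ℝ := fun s => ∑ i ∈ Finset.range (s+1), max (D 1 i) 0 with hMD1def
  have hMD10 : ∀ s, 0 ≤ MD1 s := fun s => Finset.sum_nonneg fun i _ => le_max_right _ _
  have hMD1 : ∀ s i, i ≤ s → max (D 1 i) 0 ≤ MD1 s := by
    intro s i hi
    exact Finset.single_le_sum (f := fun i => max (D 1 i) 0)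
      (fun i _ => le_max_right _ _) (Finset.mem_range.2 (by omega))
  set Cm : ℕ → ℝ := fun n =>
    Nat.rec (motive := fun _ => ℝ) 1 (fun s ih => MD1 s + max K 1 * ih) n with hCmdef
  have hCm_succ : ∀ s, Cm (s+1) = MD1 s + max K 1 * Cm s := fun s => rfl
  have hCm1 : ∀ s, 1 ≤ Cm s := by
    intro s
    induction s with
    | zero => exact le_refl 1
    | succ s ih =>
      rw [hCm_succ]
      have h1 : (1:ℝ) ≤ max K 1 := le_max_right _ _
      have h2 := hMD10 s
      nlinarith
  have hCm : ∀ s, ∀ S : Finset ℕ, S.Nonempty → S.card ≤ s → |m S| ≤ Cm s := by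
    intro s
    induction s with
    | zero => intro S hS hc; exact absurd (Finset.card_pos.2 hS) (by omega)
    | succ s ih =>
      intro S hS hc
      obtain ⟨j, hj⟩ := hS
      rw [hCm_succ]
      by_cases he : S.erase j = ∅
      · have hSj : S = {j} := by
          rcases (Finset.erase_eq_empty_iff S j).1 he with h | h
          · exact absurd (h ▸ hj) (Finset.notMem_empty j)
          · exact h
        subst hSj
        have h1 : (1:ℝ) ≤ max K 1 := le_max_right _ _
        have h2 := hMD10 s
        have h3 := hCm1 s
        have h4 : K ≤ max K 1 := le_max_left _ _
        have := hK j
        nlinarith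
      · have hS' : (S.erase j).Nonempty := Finset.nonempty_of_ne_empty he
        have hsplit : ({j} : Finset ℕ) ∪ S.erase j = S := by
          rw [← Finset.insert_eq, Finset.insert_erase hj]
        have hdisj : ({j} : Finset ℕ) ∩ S.erase j = ∅ :=
          Finset.singleton_inter_of_notMem (Finset.notMem_erase j S)
        have hcard : S.card = (S.erase j).card + 1 := (Finset.card_erase_add_one hj).symm
        have hb := hD {j} (S.erase j) (Finset.singleton_nonempty j) hS' hdisj
        rw [hsplit] at hb
        have hexp1 : Real.exp (-m₀ * minDist x {j} (S.erase j)) ≤ 1 := exp_le_one x hm₀ _ _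
        have hexp0 : (0:ℝ) < Real.exp (-m₀ * minDist x {j} (S.erase j)) := Real.exp_pos _
        have h5 : |m S - m {j} * m (S.erase j)| ≤ MD1 s := by
          calc |m S - m {j} * m (S.erase j)|
              ≤ D 1 (S.erase j).card * Real.exp (-m₀ * minDist x {j} (S.erase j)) := by
                simpa using hb
            _ ≤ max (D 1 (S.erase j).card) 0
                * Real.exp (-m₀ * minDist x {j} (S.erase j)) :=
                mul_le_mul_of_nonneg_right (le_max_left _ _) hexp0.le
            _ ≤ max (D 1 (S.erase j).card) 0 * 1 :=
                mul_le_mul_of_nonneg_left hexp1 (le_max_right _ _)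
            _ ≤ MD1 s := by rw [mul_one]; exact hMD1 s _ (by omega)
        have h6 : |m {j} * m (S.erase j)| ≤ max K 1 * Cm s := by
          rw [abs_mul]
          apply mul_le_mul ((hK j).trans (le_max_left _ _))
            (ih _ hS' (by omega)) (abs_nonneg _)
            (le_trans zero_le_one (le_max_right _ _))
        calc |m S| = |m {j} * m (S.erase j) + (m S - m {j} * m (S.erase j))| := by ring_nf
          _ ≤ |m {j} * m (S.erase j)| + |m S - m {j} * m (S.erase j)| := abs_add_le _ _
          _ ≤ max K 1 * Cm s + MD1 s := add_le_add h6 h5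
          _ = MD1 s + max K 1 * Cm s := by ring
  -- bound on |T S| in terms of cardinality
  set Ct : ℕ → ℝ := fun n =>
    Nat.rec (motive := fun _ => ℝ) 1
      (fun s ih => Cm (s+1) + 2^(2^(s+1)) * ih^(2^(s+1))) n with hCtdef
  have hCt_succ : ∀ s, Ct (s+1) = Cm (s+1) + 2^(2^(s+1)) * (Ct s)^(2^(s+1)) := fun s => rfl
  have hCt1 : ∀ s, 1 ≤ Ct s := by
    intro s
    induction s with
    | zero => exact le_refl 1
    | succ s ih =>
      rw [hCt_succ]
      have h1 := hCm1 (s+1)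
      have h2 : (1:ℝ) ≤ (Ct s)^(2^(s+1)) := one_le_pow₀ ih
      have h3 : (1:ℝ) ≤ (2:ℝ)^(2^(s+1)) := one_le_pow₀ one_le_two
      nlinarith
  have hCtmono : ∀ s t, s ≤ t → Ct s ≤ Ct t := by
    have hstep : ∀ s, Ct s ≤ Ct (s+1) := by
      intro s
      rw [hCt_succ]
      have h1 := hCm1 (s+1)
      have h2 : Ct s ≤ (Ct s)^(2^(s+1)) := le_self_pow₀ (by linarith [hCt1 s]) (by positivity)
      have h3 : (1:ℝ) ≤ (2:ℝ)^(2^(s+1)) := one_le_pow₀ one_le_two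
      nlinarith [hCt1 s]
    exact fun s t hst => monotone_nat_of_le_succ hstep hst
  have hCt : ∀ s, ∀ S : Finset ℕ, S.Nonempty → S.card ≤ s → |T S| ≤ Ct s := by
    intro s
    induction s with
    | zero => intro S hS hc; exact absurd (Finset.card_pos.2 hS) (by omega)
    | succ s ih =>
      intro S hS hc
      by_cases hsmall : S.card ≤ s
      · exact (ih S hS hsmall).trans (hCtmono s (s+1) (by omega))
      have hceq : S.card = s + 1 := by omega
      rw [T_rec m T hT S hS, hCt_succ]
      have hbound : ∀ P ∈ (partitionsOf S).erase {S},
          |∏ b ∈ P, T b| ≤ (Ct s)^(2^(s+1)) := by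
        intro P hPe
        have hP : P ∈ partitionsOf S := Finset.mem_of_mem_erase hPe
        have hPne : P ≠ {S} := Finset.ne_of_mem_erase hPe
        rw [Finset.abs_prod]
        apply prod_le_pow (hCt1 s)
        · intro b hb
          have hlt : b ⊂ S := block_ne_top hP hPne hb
          exact ih b (block_nonempty hP hb) (by
            have := Finset.card_lt_card hlt
            omega)
        · calc P.card ≤ 2 ^ S.card := card_block_le hP
            _ = 2 ^ (s+1) := by rw [hceq]
      have hsum : |∑ P ∈ (partitionsOf S).erase {S}, ∏ b ∈ P, T b|
          ≤ 2^(2^(s+1)) * (Ct s)^(2^(s+1)) := by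
        calc |∑ P ∈ (partitionsOf S).erase {S}, ∏ b ∈ P, T b|
            ≤ ∑ P ∈ (partitionsOf S).erase {S}, |∏ b ∈ P, T b| :=
              Finset.abs_sum_le_sum_abs _ _
          _ ≤ ((partitionsOf S).erase {S}).card • ((Ct s)^(2^(s+1))) :=
              Finset.sum_le_card_nsmul _ _ _ hbound
          _ ≤ 2^(2^(s+1)) * (Ct s)^(2^(s+1)) := by
              rw [nsmul_eq_mul]
              apply mul_le_mul_of_nonneg_right
              · have h1 : ((partitionsOf S).erase {S}).card ≤ 2^(2^(s+1)) := by
                  calc _ ≤ (partitionsOf S).card :=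
                        Finset.card_le_card (Finset.erase_subset _ _)
                    _ ≤ 2^(2^S.card) := card_pof_le _
                    _ = 2^(2^(s+1)) := by rw [hceq]
                calc (((partitionsOf S).erase {S}).card : ℝ) ≤ ((2^(2^(s+1)) : ℕ) : ℝ) :=
                      Nat.cast_le.2 h1
                  _ = (2:ℝ)^(2^(s+1)) := by push_cast; ring
              · exact pow_nonneg (le_trans zero_le_one (hCt1 s)) _
      calc |m S - ∑ P ∈ (partitionsOf S).erase {S}, ∏ b ∈ P, T b|
          ≤ |m S| + |∑ P ∈ (partitionsOf S).erase {S}, ∏ b ∈ P, T b| := abs_sub _ _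
        _ ≤ Cm (s+1) + 2^(2^(s+1)) * (Ct s)^(2^(s+1)) :=
            add_le_add (hCm (s+1) S hS hc) hsum
  -- the clustering bound itself
  set MDf : ℕ → ℝ := fun s => ∑ p ∈ Finset.range (s+1) ×ˢ Finset.range (s+1),
    max (D p.1 p.2) 0 with hMDdef
  have hMD0 : ∀ s, 0 ≤ MDf s := fun s => Finset.sum_nonneg fun p _ => le_max_right _ _
  have hMD : ∀ s n k, n ≤ s → k ≤ s → max (D n k) 0 ≤ MDf s := by
    intro s n k hn hk
    simp only [hMDdef]
    exact Finset.single_le_sum (f := fun p : ℕ × ℕ => max (D p.1 p.2) 0)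
      (fun p _ => le_max_right _ _) (a := (n, k))
      (by rw [Finset.mem_product, Finset.mem_range, Finset.mem_range]; omega)
  set E : ℕ → ℝ := fun n =>
    Nat.rec (motive := fun _ => ℝ) 1
      (fun s ih => MDf (s+1) + 2^(2^(s+1)) * (Ct (s+1))^(2^(s+1)) * ih) n with hEdef
  have hE_succ : ∀ s, E (s+1) = MDf (s+1) + 2^(2^(s+1)) * (Ct (s+1))^(2^(s+1)) * E s :=
    fun s => rfl
  have hE1 : ∀ s, 1 ≤ E s := by
    intro s
    induction s with
    | zero => exact le_refl 1
    | succ s ih =>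
      rw [hE_succ]
      have h1 := hMD0 (s+1)
      have h2 : (1:ℝ) ≤ (Ct (s+1))^(2^(s+1)) := one_le_pow₀ (hCt1 (s+1))
      have h3 : (1:ℝ) ≤ (2:ℝ)^(2^(s+1)) := one_le_pow₀ one_le_two
      have hc : (1:ℝ) ≤ 2^(2^(s+1)) * (Ct (s+1))^(2^(s+1)) := by nlinarith
      have h4 : E s ≤ 2^(2^(s+1)) * (Ct (s+1))^(2^(s+1)) * E s :=
        le_mul_of_one_le_left (by linarith) hc
      linarith
  have hEmono : ∀ s t, s ≤ t → E s ≤ E t := by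
    have hstep : ∀ s, E s ≤ E (s+1) := by
      intro s
      rw [hE_succ]
      have h1 := hMD0 (s+1)
      have h2 : (1:ℝ) ≤ (Ct (s+1))^(2^(s+1)) := one_le_pow₀ (hCt1 (s+1))
      have h3 : (1:ℝ) ≤ (2:ℝ)^(2^(s+1)) := one_le_pow₀ one_le_two
      have hc : (1:ℝ) ≤ 2^(2^(s+1)) * (Ct (s+1))^(2^(s+1)) := by nlinarith
      have h4 : E s ≤ 2^(2^(s+1)) * (Ct (s+1))^(2^(s+1)) * E s :=
        le_mul_of_one_le_left (by linarith [hE1 s]) hc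
      linarith
    exact fun s t hst => monotone_nat_of_le_succ hstep hst
  have main : ∀ s, ∀ X Y : Finset ℕ, X.Nonempty → Y.Nonempty → X ∩ Y = ∅ →
      (X ∪ Y).card ≤ s → |T (X ∪ Y)| ≤ E s * Real.exp (-m₀ * minDist x X Y) := by
    intro s
    induction s with
    | zero =>
      intro X Y hX hY hXY hc
      have := Finset.card_pos.2 (hX.mono (Finset.subset_union_left (s₂ := Y)))
      omega
    | succ s ih =>
      intro X Y hX hY hXY hc
      have hexps : (0:ℝ) < Real.exp (-m₀ * minDist x X Y) := Real.exp_pos _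
      by_cases hsmall : (X ∪ Y).card ≤ s
      · exact (ih X Y hX hY hXY hsmall).trans
          (mul_le_mul_of_nonneg_right (hEmono s (s+1) (by omega)) hexps.le)
      have hceq : (X ∪ Y).card = s + 1 := by omega
      -- decompose
      have hXYne : (X ∪ Y).Nonempty := hX.mono Finset.subset_union_left
      have htopmem : ({X ∪ Y} : Finset (Finset ℕ)) ∈
          (partitionsOf (X ∪ Y)).filter (fun P => ¬ ∀ b ∈ P, b ⊆ X ∨ b ⊆ Y) := by
        refine Finset.mem_filter.2 ⟨top_mem_pof hXYne, ?_⟩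
        intro h
        rcases h (X ∪ Y) (Finset.mem_singleton_self _) with h' | h'
        · obtain ⟨y, hy⟩ := hY
          exact absurd (Finset.mem_inter.2 ⟨h' (Finset.mem_union_right _ hy), hy⟩)
            (by simp [hXY])
        · obtain ⟨y, hy⟩ := hX
          exact absurd (Finset.mem_inter.2 ⟨hy, h' (Finset.mem_union_left _ hy)⟩)
            (by simp [hXY])
      have hkey := key_identity m T hT X Y hX hY hXY
      rw [← Finset.add_sum_erase _ _ htopmem, Finset.prod_singleton] at hkey
      have hTXY : T (X ∪ Y) = (m (X ∪ Y) - m X * m Y)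
          - ∑ P ∈ ((partitionsOf (X ∪ Y)).filter
              (fun P => ¬ ∀ b ∈ P, b ⊆ X ∨ b ⊆ Y)).erase {X ∪ Y}, ∏ b ∈ P, T b := by
        linarith
      -- bound the remaining connected partitions
      have hbound : ∀ P ∈ ((partitionsOf (X ∪ Y)).filter
            (fun P => ¬ ∀ b ∈ P, b ⊆ X ∨ b ⊆ Y)).erase {X ∪ Y},
          |∏ b ∈ P, T b| ≤ (E s * Real.exp (-m₀ * minDist x X Y))
            * (Ct (s+1))^(2^(s+1)) := by
        intro P hPe
        have hPf := Finset.mem_of_mem_erase hPe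
        have hPne : P ≠ {X ∪ Y} := Finset.ne_of_mem_erase hPe
        obtain ⟨hP, hconn⟩ := Finset.mem_filter.1 hPf
        push_neg at hconn
        obtain ⟨b₀, hb₀P, hb₀X, hb₀Y⟩ := hconn
        have hb₀sub : b₀ ⊆ X ∪ Y := block_subset hP hb₀P
        have hbXne : (b₀ ∩ X).Nonempty := by
          obtain ⟨a, ha, haY⟩ := Finset.not_subset.1 hb₀Y
          have : a ∈ X ∪ Y := hb₀sub ha
          rcases Finset.mem_union.1 this with h | h
          · exact ⟨a, Finset.mem_inter.2 ⟨ha, h⟩⟩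
          · exact absurd h haY
        have hbYne : (b₀ ∩ Y).Nonempty := by
          obtain ⟨a, ha, haX⟩ := Finset.not_subset.1 hb₀X
          have : a ∈ X ∪ Y := hb₀sub ha
          rcases Finset.mem_union.1 this with h | h
          · exact absurd h haX
          · exact ⟨a, Finset.mem_inter.2 ⟨ha, h⟩⟩
        have heq : (b₀ ∩ X) ∪ (b₀ ∩ Y) = b₀ := by
          rw [← Finset.inter_union_distrib_left]
          exact Finset.inter_eq_left.2 hb₀sub
        have hdis : (b₀ ∩ X) ∩ (b₀ ∩ Y) = ∅ := by
          apply Finset.subset_empty.1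
          rw [← hXY]
          exact Finset.inter_subset_inter Finset.inter_subset_right Finset.inter_subset_right
        have hb₀lt : b₀ ⊂ X ∪ Y := block_ne_top hP hPne hb₀P
        have hb₀card : b₀.card ≤ s := by
          have := Finset.card_lt_card hb₀lt
          omega
        have hTb₀ : |T b₀| ≤ E s * Real.exp (-m₀ * minDist x X Y) := by
          have h1 := ih (b₀ ∩ X) (b₀ ∩ Y) hbXne hbYne hdis (by rw [heq]; exact hb₀card)
          rw [heq] at h1
          calc |T b₀| ≤ E s * Real.exp (-m₀ * minDist x (b₀ ∩ X) (b₀ ∩ Y)) := h1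
            _ ≤ E s * Real.exp (-m₀ * minDist x X Y) := by
                apply mul_le_mul_of_nonneg_left
                  (exp_mono_dist x hm₀ hbXne hbYne Finset.inter_subset_right
                    Finset.inter_subset_right)
                  (le_trans zero_le_one (hE1 s))
        have hprodrest : ∏ b ∈ P.erase b₀, |T b| ≤ (Ct (s+1))^(2^(s+1)) := by
          apply prod_le_pow (hCt1 (s+1))
          · intro b hb
            have hbP : b ∈ P := Finset.mem_of_mem_erase hb
            exact hCt (s+1) b (block_nonempty hP hbP)
              (hceq ▸ Finset.card_le_card (block_subset hP hbP))
          · calc (P.erase b₀).card ≤ P.card := Finset.card_le_card (Finset.erase_subset _ _)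
              _ ≤ 2 ^ (X ∪ Y).card := card_block_le hP
              _ = 2 ^ (s+1) := by rw [hceq]
        calc |∏ b ∈ P, T b| = ∏ b ∈ P, |T b| := Finset.abs_prod _ _
          _ = |T b₀| * ∏ b ∈ P.erase b₀, |T b| := (Finset.mul_prod_erase P _ hb₀P).symm
          _ ≤ (E s * Real.exp (-m₀ * minDist x X Y)) * (Ct (s+1))^(2^(s+1)) :=
              mul_le_mul hTb₀ hprodrest
                (Finset.prod_nonneg fun b _ => abs_nonneg _)
                (mul_nonneg (le_trans zero_le_one (hE1 s)) hexps.le)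
      have hsum : |∑ P ∈ ((partitionsOf (X ∪ Y)).filter
            (fun P => ¬ ∀ b ∈ P, b ⊆ X ∨ b ⊆ Y)).erase {X ∪ Y}, ∏ b ∈ P, T b|
          ≤ 2^(2^(s+1)) * ((E s * Real.exp (-m₀ * minDist x X Y))
            * (Ct (s+1))^(2^(s+1))) := by
        calc |∑ P ∈ ((partitionsOf (X ∪ Y)).filter
              (fun P => ¬ ∀ b ∈ P, b ⊆ X ∨ b ⊆ Y)).erase {X ∪ Y}, ∏ b ∈ P, T b|
            ≤ ∑ P ∈ ((partitionsOf (X ∪ Y)).filter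
              (fun P => ¬ ∀ b ∈ P, b ⊆ X ∨ b ⊆ Y)).erase {X ∪ Y}, |∏ b ∈ P, T b| :=
              Finset.abs_sum_le_sum_abs _ _
          _ ≤ (((partitionsOf (X ∪ Y)).filter
              (fun P => ¬ ∀ b ∈ P, b ⊆ X ∨ b ⊆ Y)).erase {X ∪ Y}).card
              • ((E s * Real.exp (-m₀ * minDist x X Y)) * (Ct (s+1))^(2^(s+1))) :=
              Finset.sum_le_card_nsmul _ _ _ hbound
          _ ≤ 2^(2^(s+1)) * ((E s * Real.exp (-m₀ * minDist x X Y))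
              * (Ct (s+1))^(2^(s+1))) := by
              rw [nsmul_eq_mul]
              apply mul_le_mul_of_nonneg_right
              · have h1 : (((partitionsOf (X ∪ Y)).filter
                    (fun P => ¬ ∀ b ∈ P, b ⊆ X ∨ b ⊆ Y)).erase {X ∪ Y}).card
                    ≤ 2^(2^(s+1)) := by
                  calc _ ≤ ((partitionsOf (X ∪ Y)).filter
                        (fun P => ¬ ∀ b ∈ P, b ⊆ X ∨ b ⊆ Y)).card :=
                        Finset.card_le_card (Finset.erase_subset _ _)
                    _ ≤ (partitionsOf (X ∪ Y)).card := Finset.card_filter_le _ _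
                    _ ≤ 2^(2^(X ∪ Y).card) := card_pof_le _
                    _ = 2^(2^(s+1)) := by rw [hceq]
                calc ((((partitionsOf (X ∪ Y)).filter
                    (fun P => ¬ ∀ b ∈ P, b ⊆ X ∨ b ⊆ Y)).erase {X ∪ Y}).card : ℝ)
                    ≤ ((2^(2^(s+1)) : ℕ) : ℝ) := Nat.cast_le.2 h1
                  _ = (2:ℝ)^(2^(s+1)) := by push_cast; ring
              · apply mul_nonneg (mul_nonneg (le_trans zero_le_one (hE1 s)) hexps.le)
                exact pow_nonneg (le_trans zero_le_one (hCt1 (s+1))) _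
      have hmXY : |m (X ∪ Y) - m X * m Y| ≤ MDf (s+1) * Real.exp (-m₀ * minDist x X Y) := by
        calc |m (X ∪ Y) - m X * m Y|
            ≤ D X.card Y.card * Real.exp (-m₀ * minDist x X Y) := hD X Y hX hY hXY
          _ ≤ max (D X.card Y.card) 0 * Real.exp (-m₀ * minDist x X Y) :=
              mul_le_mul_of_nonneg_right (le_max_left _ _) hexps.le
          _ ≤ MDf (s+1) * Real.exp (-m₀ * minDist x X Y) := by
              apply mul_le_mul_of_nonneg_right _ hexps.le
              apply hMD
              · calc X.card ≤ (X ∪ Y).card := Finset.card_le_card Finset.subset_union_left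
                  _ = s + 1 := hceq
              · calc Y.card ≤ (X ∪ Y).card := Finset.card_le_card Finset.subset_union_right
                  _ = s + 1 := hceq
      rw [hTXY, hE_succ]
      calc |(m (X ∪ Y) - m X * m Y) - ∑ P ∈ ((partitionsOf (X ∪ Y)).filter
            (fun P => ¬ ∀ b ∈ P, b ⊆ X ∨ b ⊆ Y)).erase {X ∪ Y}, ∏ b ∈ P, T b|
          ≤ |m (X ∪ Y) - m X * m Y| + |∑ P ∈ ((partitionsOf (X ∪ Y)).filter
            (fun P => ¬ ∀ b ∈ P, b ⊆ X ∨ b ⊆ Y)).erase {X ∪ Y}, ∏ b ∈ P, T b| :=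
            abs_sub _ _
        _ ≤ MDf (s+1) * Real.exp (-m₀ * minDist x X Y)
            + 2^(2^(s+1)) * ((E s * Real.exp (-m₀ * minDist x X Y))
              * (Ct (s+1))^(2^(s+1))) := add_le_add hmXY hsum
        _ = (MDf (s+1) + 2^(2^(s+1)) * (Ct (s+1))^(2^(s+1)) * E s)
            * Real.exp (-m₀ * minDist x X Y) := by ring
  refine ⟨fun n k => E (n + k), ?_⟩
  intro X Y hX hY hXY
  apply main (X.card + Y.card) X Y hX hY hXY
  rw [Finset.card_union_of_disjoint (Finset.disjoint_iff_inter_eq_empty.2 hXY)]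

end PofAux

/-- Exponential clustering of the truncated moments (with constants depending
only on the cardinalities) is equivalent to exponential clustering of the
moments. One-point moments are assumed uniformly bounded (which follows from
translation invariance). -/
theorem exponential_clustering_iff (d : ℕ) (x : ℕ → EuclideanSpace ℝ (Fin d))
    (m₀ : ℝ) (hm₀ : 0 < m₀) (m T : Finset ℕ → ℝ) (hT0 : T ∅ = 0)
    (hT : ∀ J : Finset ℕ, J.Nonempty → m J = ∑ P ∈ partitionsOf J, ∏ b ∈ P, T b)
    (hone : ∃ K : ℝ, ∀ j : ℕ, |m {j}| ≤ K) :
    (∃ D' : ℕ → ℕ → ℝ, ∀ X Y : Finset ℕ, X.Nonempty → Y.Nonempty → X ∩ Y = ∅ →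
        |T (X ∪ Y)| ≤ D' X.card Y.card * Real.exp (-m₀ * minDist x X Y)) ↔
      (∃ D : ℕ → ℕ → ℝ, ∀ X Y : Finset ℕ, X.Nonempty → Y.Nonempty → X ∩ Y = ∅ →
        |m (X ∪ Y) - m X * m Y| ≤ D X.card Y.card * Real.exp (-m₀ * minDist x X Y)) := by
  obtain ⟨K, hK⟩ := hone
  constructor
  · rintro ⟨D', hD'⟩
    exact PofAux.forward_dir x hm₀ m T hT hK hD'
  · rintro ⟨D, hD⟩
    exact PofAux.reverse_dir x hm₀ m T hT hK hD
end

section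
/- Block-truncated moments expand into connected partitions: for pairwise disjoint finite sets J_1, …, J_m ⊆ ℕ, ⟨J_1 ⋯ J_m⟩^{(T)} = Σ_{I ∈ P_c(J_1,…,J_m)} Π_{l=1}^k ⟨I_l⟩^T, where ⟨·⟩^{(T)} denotes the truncation in which each J_l is treated as a single object, and P_c(J_1,…,J_m) is the set of partitions of ⋃_l J_l that are connected with respect to the blocks J_1, …, J_m. -/
open scoped BigOperators

/-!
Call a set `B` of block labels saturated for a partition `P` of `⋃_{l ∈ A} J_l` if every block of
`P` lies inside or outside `⋃_{l ∈ B} J_l`; saturated sets are closed under differences, so the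
minimal nonempty ones (the components) partition `A`. `P` is connected exactly when `A` is its only
component, and `P` is recovered from its component partition `Q` together with the restrictions of
`P` to the blocks of `Q`, each of which is connected. Hence
`⟨⋃_{l ∈ A} J_l⟩ = Σ_Q Π_{B ∈ Q} Σ_{P connected on B} Π ⟨·⟩^T`, which is the recursion defining the
block truncation; the moment-cumulant recursion determines the truncation uniquely.
-/

open Finset

section Partitions

variable {α : Type*} [DecidableEq α] {S X : Finset α} {P : Finset (Finset α)} {b b' : Finset α}

theorem mem_partitionsOf :
    P ∈ partitionsOf S ↔
      ∅ ∉ P ∧ (∀ a ∈ P, ∀ b ∈ P, a ≠ b → a ∩ b = ∅) ∧ P.biUnion id = S := by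
  unfold partitionsOf
  simp only [mem_filter, mem_powerset, and_iff_right_iff_imp]
  rintro ⟨-, -, hu⟩ b hb
  rw [mem_powerset, ← hu]
  exact subset_biUnion_of_mem id hb

theorem mem_partitionsOf_of (hne : ∀ b ∈ P, b.Nonempty) (hsub : ∀ b ∈ P, b ⊆ S)
    (hcover : ∀ x ∈ S, ∃ b ∈ P, x ∈ b)
    (huniq : ∀ b ∈ P, ∀ b' ∈ P, ∀ x ∈ b, x ∈ b' → b = b') : P ∈ partitionsOf S := by
  refine mem_partitionsOf.mpr ⟨fun h => not_nonempty_empty (hne ∅ h), ?_, ?_⟩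
  · intro a ha b hb hab
    exact eq_empty_of_forall_notMem fun x hx =>
      hab (huniq a ha b hb x (mem_inter.mp hx).1 (mem_inter.mp hx).2)
  · ext x
    simp only [mem_biUnion, id]
    exact ⟨fun ⟨b, hb, hx⟩ => hsub b hb hx, hcover x⟩

theorem subset_of_mem_partitionsOf (hP : P ∈ partitionsOf S) (hb : b ∈ P) : b ⊆ S := by
  rw [← (mem_partitionsOf.mp hP).2.2]
  exact subset_biUnion_of_mem id hb

theorem nonempty_of_mem_partitionsOf (hP : P ∈ partitionsOf S) (hb : b ∈ P) : b.Nonempty :=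
  nonempty_iff_ne_empty.mpr fun h => (mem_partitionsOf.mp hP).1 (h ▸ hb)

theorem exists_mem_of_mem_partitionsOf (hP : P ∈ partitionsOf S) {x : α} (hx : x ∈ S) :
    ∃ b ∈ P, x ∈ b := by
  rw [← (mem_partitionsOf.mp hP).2.2] at hx
  simpa using hx

theorem eq_of_mem_of_mem_partitionsOf (hP : P ∈ partitionsOf S) (hb : b ∈ P) (hb' : b' ∈ P)
    {x : α} (hx : x ∈ b) (hx' : x ∈ b') : b = b' := by
  by_contra hne
  have hbb' := (mem_partitionsOf.mp hP).2.1 b hb b' hb' hne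
  exact notMem_empty x (hbb' ▸ mem_inter.mpr ⟨hx, hx'⟩)

theorem singleton_mem_partitionsOf (hS : S.Nonempty) : {S} ∈ partitionsOf S :=
  mem_partitionsOf_of (by simpa) (by simp) (by simp) (by simp)

theorem ssubset_of_mem_partitionsOf (hP : P ∈ partitionsOf S) (hPS : P ≠ {S}) (hb : b ∈ P) :
    b ⊂ S := by
  refine (subset_of_mem_partitionsOf hP hb).ssubset_of_ne fun hbS => hPS ?_
  subst hbS
  refine eq_singleton_iff_unique_mem.mpr ⟨hb, fun b' hb' => ?_⟩
  obtain ⟨x, hx⟩ := nonempty_of_mem_partitionsOf hP hb'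
  exact eq_of_mem_of_mem_partitionsOf hP hb' hb hx (subset_of_mem_partitionsOf hP hb' hx)

theorem filter_subset_mem_partitionsOf (hP : P ∈ partitionsOf S) (hX : X ⊆ S)
    (hsat : ∀ b ∈ P, b ⊆ X ∨ Disjoint b X) : P.filter (· ⊆ X) ∈ partitionsOf X := by
  refine mem_partitionsOf_of (fun b hb => nonempty_of_mem_partitionsOf hP (mem_filter.mp hb).1)
    (fun b hb => (mem_filter.mp hb).2) (fun x hx => ?_) (fun b hb b' hb' x hx hx' =>
      eq_of_mem_of_mem_partitionsOf hP (mem_filter.mp hb).1 (mem_filter.mp hb').1 hx hx')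
  obtain ⟨b, hb, hxb⟩ := exists_mem_of_mem_partitionsOf hP (hX hx)
  exact ⟨b, mem_filter.mpr ⟨hb, (hsat b hb).resolve_right fun h => disjoint_left.mp h hxb hx⟩, hxb⟩

theorem eq_of_sum_prod_partitionsOf_eq {ι R : Type*} [DecidableEq ι] [CommSemiring R]
    [IsLeftCancelAdd R] {f g : Finset ι → R}
    (h : ∀ A : Finset ι, A.Nonempty →
      ∑ Q ∈ partitionsOf A, ∏ B ∈ Q, f B = ∑ Q ∈ partitionsOf A, ∏ B ∈ Q, g B)
    {A : Finset ι} (hA : A.Nonempty) : f A = g A := by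
  induction A using Finset.strongInduction with
  | H A ih =>
  have hsplit (φ : Finset ι → R) : ∑ Q ∈ partitionsOf A, ∏ B ∈ Q, φ B =
      ∑ Q ∈ (partitionsOf A).erase {A}, ∏ B ∈ Q, φ B + φ A := by
    rw [← sum_erase_add _ _ (singleton_mem_partitionsOf hA), prod_singleton]
  have hfiner : ∑ Q ∈ (partitionsOf A).erase {A}, ∏ B ∈ Q, f B =
      ∑ Q ∈ (partitionsOf A).erase {A}, ∏ B ∈ Q, g B :=
    sum_congr rfl fun Q hQ => prod_congr rfl fun B hB => by
      obtain ⟨hQA, hQ⟩ := mem_erase.mp hQ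
      exact ih B (ssubset_of_mem_partitionsOf hQ hQA hB) (nonempty_of_mem_partitionsOf hQ hB)
  have hA' := h A hA
  rw [hsplit f, hsplit g, hfiner] at hA'
  exact add_left_cancel hA'

end Partitions

namespace Blocks

open Function

variable {ι α : Type*} {J : ι → Finset α} {A B C : Finset ι} {l l' : ι}
  {P : Finset (Finset α)} {Q : Finset (Finset ι)} {p : ∀ B ∈ Q, Finset (Finset α)} {b : Finset α}

theorem eq_of_mem_of_mem (hJ : Pairwise (Disjoint on J)) {x : α} (h : x ∈ J l) (h' : x ∈ J l') :
    l = l' :=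
  hJ.eq (not_disjoint_iff.mpr ⟨x, h, h'⟩)

variable [DecidableEq α]

theorem subset_of_biUnion_subset_biUnion (hJne : ∀ l, (J l).Nonempty)
    (hJ : Pairwise (Disjoint on J)) (h : B.biUnion J ⊆ C.biUnion J) : B ⊆ C := by
  intro l hl
  obtain ⟨x, hx⟩ := hJne l
  obtain ⟨l', hl', hx'⟩ := mem_biUnion.mp (h (mem_biUnion.mpr ⟨l, hl, hx⟩))
  exact eq_of_mem_of_mem hJ hx hx' ▸ hl'

def IsSaturated (J : ι → Finset α) (P : Finset (Finset α)) (B : Finset ι) : Prop :=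
  ∀ b ∈ P, b ⊆ B.biUnion J ∨ Disjoint b (B.biUnion J)

theorem IsSaturated.subset {P' : Finset (Finset α)} (h : IsSaturated J P B) (hP' : P' ⊆ P) :
    IsSaturated J P' B :=
  fun b hb => h b (hP' hb)

theorem IsSaturated.of_filter (hB : IsSaturated J P B) (hCB : C ⊆ B)
    (hC : IsSaturated J (P.filter (· ⊆ B.biUnion J)) C) : IsSaturated J P C := by
  intro b hb
  rcases hB b hb with hbB | hbB
  · exact hC b (mem_filter.mpr ⟨hb, hbB⟩)
  · exact Or.inr (hbB.mono_right (biUnion_subset_biUnion_of_subset_left J hCB))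

def glue (Q : Finset (Finset ι)) (p : ∀ B ∈ Q, Finset (Finset α)) : Finset (Finset α) :=
  Q.attach.biUnion fun B => p B.1 B.2

theorem mem_glue : b ∈ glue Q p ↔ ∃ B, ∃ hB : B ∈ Q, b ∈ p B hB := by
  simp [glue]

variable [DecidableEq ι]

theorem biUnion_sdiff (hJ : Pairwise (Disjoint on J)) :
    (B \ C).biUnion J = B.biUnion J \ C.biUnion J := by
  ext x
  simp only [mem_biUnion, mem_sdiff, not_exists, not_and]
  constructor
  · rintro ⟨l, ⟨hlB, hlC⟩, hx⟩
    exact ⟨⟨l, hlB, hx⟩, fun l' hl' hx' => hlC (eq_of_mem_of_mem hJ hx hx' ▸ hl')⟩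
  · rintro ⟨⟨l, hlB, hx⟩, hC⟩
    exact ⟨l, ⟨hlB, fun hlC => hC l hlC hx⟩, hx⟩

theorem eq_of_mem_biUnion_of_mem_biUnion (hJ : Pairwise (Disjoint on J))
    {Q : Finset (Finset ι)} (hQ : Q ∈ partitionsOf A) (hB : B ∈ Q) (hC : C ∈ Q) {x : α}
    (hxB : x ∈ B.biUnion J) (hxC : x ∈ C.biUnion J) : B = C := by
  obtain ⟨l, hl, hxl⟩ := mem_biUnion.mp hxB
  obtain ⟨l', hl', hxl'⟩ := mem_biUnion.mp hxC
  exact eq_of_mem_of_mem_partitionsOf hQ hB hC hl (eq_of_mem_of_mem hJ hxl' hxl ▸ hl')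

theorem IsSaturated.sdiff (hJ : Pairwise (Disjoint on J)) (hB : IsSaturated J P B)
    (hC : IsSaturated J P C) : IsSaturated J P (B \ C) := by
  intro b hb
  rw [biUnion_sdiff hJ]
  rcases hB b hb with hbB | hbB
  · rcases hC b hb with hbC | hbC
    · exact Or.inr (disjoint_sdiff.mono_left hbC)
    · exact Or.inl (subset_sdiff.mpr ⟨hbB, hbC⟩)
  · exact Or.inr (hbB.mono_right sdiff_subset)

instance : DecidablePred (IsSaturated J P) :=
  fun _ => inferInstanceAs (Decidable (∀ _ ∈ _, _))

def component (J : ι → Finset α) (P : Finset (Finset α)) (A : Finset ι) (l : ι) : Finset ι :=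
  A.filter fun l' => ∀ B ∈ A.powerset, IsSaturated J P B → l ∈ B → l' ∈ B

theorem component_subset : component J P A l ⊆ A := filter_subset _ _

theorem mem_component_self (hl : l ∈ A) : l ∈ component J P A l :=
  mem_filter.mpr ⟨hl, fun _ _ _ h => h⟩

theorem component_subset_of_isSaturated (hBA : B ⊆ A) (hB : IsSaturated J P B) (hl : l ∈ B) :
    component J P A l ⊆ B :=
  fun _ h => (mem_filter.mp h).2 B (mem_powerset.mpr hBA) hB hl

theorem isSaturated_component (hJ : Pairwise (Disjoint on J))
    (hPA : ∀ b ∈ P, b ⊆ A.biUnion J) : IsSaturated J P (component J P A l) := by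
  intro b hb
  refine or_iff_not_imp_right.mpr fun hmeet => ?_
  obtain ⟨x, hxb, hx⟩ := not_disjoint_iff.mp hmeet
  obtain ⟨lx, hlx, hxJ⟩ := mem_biUnion.mp hx
  have hbB : ∀ B ∈ A.powerset, IsSaturated J P B → l ∈ B → b ⊆ B.biUnion J := fun B hBA hB hlB =>
    (hB b hb).resolve_right fun hd => disjoint_left.mp hd hxb
      (mem_biUnion.mpr ⟨lx, (mem_filter.mp hlx).2 B hBA hB hlB, hxJ⟩)
  intro y hy
  obtain ⟨ly, hlyA, hyJ⟩ := mem_biUnion.mp (hPA b hb hy)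
  refine mem_biUnion.mpr ⟨ly, mem_filter.mpr ⟨hlyA, fun B hBA hB hlB => ?_⟩, hyJ⟩
  obtain ⟨l', hl', hyJ'⟩ := mem_biUnion.mp (hbB B hBA hB hlB hy)
  exact eq_of_mem_of_mem hJ hyJ' hyJ ▸ hl'

theorem mem_component_comm (hJ : Pairwise (Disjoint on J)) (hPA : ∀ b ∈ P, b ⊆ A.biUnion J)
    (hl : l ∈ A) (h : l' ∈ component J P A l) : l ∈ component J P A l' := by
  by_contra hl'
  have hsub := component_subset_of_isSaturated (sdiff_subset.trans component_subset)
    ((isSaturated_component hJ hPA).sdiff hJ (isSaturated_component hJ hPA))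
    (mem_sdiff.mpr ⟨mem_component_self hl, hl'⟩)
  exact (mem_sdiff.mp (hsub h)).2 (mem_component_self (component_subset h))

theorem component_eq_of_mem (hJ : Pairwise (Disjoint on J)) (hPA : ∀ b ∈ P, b ⊆ A.biUnion J)
    (hl : l ∈ A) (h : l' ∈ component J P A l) : component J P A l' = component J P A l :=
  (component_subset_of_isSaturated component_subset (isSaturated_component hJ hPA) h).antisymm
    (component_subset_of_isSaturated component_subset (isSaturated_component hJ hPA)
      (mem_component_comm hJ hPA hl h))

theorem eq_component_of_isSaturated (hJ : Pairwise (Disjoint on J))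
    (hPA : ∀ b ∈ P, b ⊆ A.biUnion J) (hl : l ∈ A) (hC : C ⊆ component J P A l)
    (hCne : C.Nonempty) (hCs : IsSaturated J P C) : C = component J P A l := by
  obtain ⟨l', hl'⟩ := hCne
  refine hC.antisymm ?_
  rw [← component_eq_of_mem hJ hPA hl (hC hl')]
  exact component_subset_of_isSaturated (hC.trans component_subset) hCs hl'

theorem component_eq_of_minimal (hJ : Pairwise (Disjoint on J))
    (hPA : ∀ b ∈ P, b ⊆ A.biUnion J) (hBA : B ⊆ A) (hB : IsSaturated J P B) (hl : l ∈ B)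
    (hmin : ∀ C ⊆ B, C.Nonempty → IsSaturated J P C → C = B) : component J P A l = B :=
  hmin _ (component_subset_of_isSaturated hBA hB hl) ⟨l, mem_component_self (hBA hl)⟩
    (isSaturated_component hJ hPA)

def components (J : ι → Finset α) (P : Finset (Finset α)) (A : Finset ι) : Finset (Finset ι) :=
  A.image (component J P A)

theorem components_mem_partitionsOf (hJ : Pairwise (Disjoint on J))
    (hP : P ∈ partitionsOf (A.biUnion J)) : components J P A ∈ partitionsOf A := by
  have hPA : ∀ b ∈ P, b ⊆ A.biUnion J := fun b hb => subset_of_mem_partitionsOf hP hb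
  refine mem_partitionsOf_of ?_ ?_ (fun l hl => ⟨_, mem_image_of_mem _ hl, mem_component_self hl⟩)
    ?_ <;> simp only [components, forall_mem_image]
  · exact fun l hl => ⟨l, mem_component_self hl⟩
  · exact fun l _ => component_subset
  · intro l hl l' hl' x hx hx'
    rw [← component_eq_of_mem hJ hPA hl hx, component_eq_of_mem hJ hPA hl' hx']

def connectedPartitions (J : ι → Finset α) (A : Finset ι) : Finset (Finset (Finset α)) :=
  (partitionsOf (A.biUnion J)).filter fun P => ¬ ∃ S ∈ P.powerset, ∃ B ∈ A.powerset,
    S.Nonempty ∧ S ≠ P ∧ B.Nonempty ∧ B ≠ A ∧ S.biUnion id = B.biUnion J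

theorem mem_connectedPartitions_iff (hJne : ∀ l, (J l).Nonempty) (hJ : Pairwise (Disjoint on J)) :
    P ∈ connectedPartitions J A ↔
      P ∈ partitionsOf (A.biUnion J) ∧ ∀ C ⊆ A, C.Nonempty → IsSaturated J P C → C = A := by
  rw [connectedPartitions, mem_filter]
  refine and_congr_right fun hP => ⟨fun hconn C hCA hCne hC => ?_, ?_⟩
  · by_contra hCA'
    have hS := filter_subset_mem_partitionsOf hP (biUnion_subset_biUnion_of_subset_left J hCA) hC
    have hSC := (mem_partitionsOf.mp hS).2.2
    refine hconn ⟨_, mem_powerset.mpr (filter_subset _ P), C, mem_powerset.mpr hCA, ?_, ?_, hCne,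
      hCA', hSC⟩
    · obtain ⟨l, hl⟩ := hCne
      obtain ⟨x, hx⟩ := hJne l
      obtain ⟨b, hb, -⟩ := exists_mem_of_mem_partitionsOf hS (mem_biUnion.mpr ⟨l, hl, hx⟩)
      exact ⟨b, hb⟩
    · intro hSP
      rw [hSP, (mem_partitionsOf.mp hP).2.2] at hSC
      exact hCA' (hCA.antisymm (subset_of_biUnion_subset_biUnion hJne hJ hSC.symm.superset))
  · rintro hmin ⟨S, hS, C, hC, -, -, hCne, hCA, hSC⟩
    rw [mem_powerset] at hS hC
    refine hCA (hmin C hC hCne fun b hb => ?_)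
    by_cases hbS : b ∈ S
    · exact Or.inl (hSC ▸ subset_biUnion_of_mem id hbS)
    · refine Or.inr (disjoint_left.mpr fun x hxb hxC => hbS ?_)
      rw [← hSC] at hxC
      obtain ⟨s, hs, hxs⟩ := mem_biUnion.mp hxC
      exact eq_of_mem_of_mem_partitionsOf hP hb (hS hs) hxb hxs ▸ hs

theorem filter_subset_component_mem_connectedPartitions (hJne : ∀ l, (J l).Nonempty)
    (hJ : Pairwise (Disjoint on J)) (hP : P ∈ partitionsOf (A.biUnion J)) (hl : l ∈ A) :
    P.filter (· ⊆ (component J P A l).biUnion J) ∈ connectedPartitions J (component J P A l) := by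
  have hPA : ∀ b ∈ P, b ⊆ A.biUnion J := fun b hb => subset_of_mem_partitionsOf hP hb
  have hsat : IsSaturated J P (component J P A l) := isSaturated_component hJ hPA
  refine (mem_connectedPartitions_iff hJne hJ).mpr ⟨filter_subset_mem_partitionsOf hP
    (biUnion_subset_biUnion_of_subset_left J component_subset) hsat, fun C hC hCne hCs => ?_⟩
  exact eq_component_of_isSaturated hJ hPA hl hC hCne (hsat.of_filter hC hCs)

theorem mem_of_mem_glue (hJ : Pairwise (Disjoint on J)) (hQ : Q ∈ partitionsOf A)
    (hp : ∀ B (hB : B ∈ Q), p B hB ∈ partitionsOf (B.biUnion J)) (hB : B ∈ Q)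
    (hb : b ∈ glue Q p) {x : α} (hxb : x ∈ b) (hxB : x ∈ B.biUnion J) : b ∈ p B hB := by
  obtain ⟨B', hB', hb'⟩ := mem_glue.mp hb
  obtain rfl := eq_of_mem_biUnion_of_mem_biUnion hJ hQ hB' hB
    (subset_of_mem_partitionsOf (hp B' hB') hb' hxb) hxB
  exact hb'

theorem glue_mem_partitionsOf (hJ : Pairwise (Disjoint on J)) (hQ : Q ∈ partitionsOf A)
    (hp : ∀ B (hB : B ∈ Q), p B hB ∈ partitionsOf (B.biUnion J)) :
    glue Q p ∈ partitionsOf (A.biUnion J) := by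
  refine mem_partitionsOf_of ?_ ?_ ?_ ?_
  · intro b hb
    obtain ⟨B, hB, hb⟩ := mem_glue.mp hb
    exact nonempty_of_mem_partitionsOf (hp B hB) hb
  · intro b hb
    obtain ⟨B, hB, hb⟩ := mem_glue.mp hb
    exact (subset_of_mem_partitionsOf (hp B hB) hb).trans
      (biUnion_subset_biUnion_of_subset_left J (subset_of_mem_partitionsOf hQ hB))
  · intro x hx
    obtain ⟨l, hl, hxl⟩ := mem_biUnion.mp hx
    obtain ⟨B, hB, hlB⟩ := exists_mem_of_mem_partitionsOf hQ hl
    obtain ⟨b, hb, hxb⟩ :=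
      exists_mem_of_mem_partitionsOf (hp B hB) (mem_biUnion.mpr ⟨l, hlB, hxl⟩)
    exact ⟨b, mem_glue.mpr ⟨B, hB, hb⟩, hxb⟩
  · intro b hb b' hb' x hxb hxb'
    obtain ⟨B, hB, hbB⟩ := mem_glue.mp hb
    have hxB := subset_of_mem_partitionsOf (hp B hB) hbB hxb
    exact eq_of_mem_of_mem_partitionsOf (hp B hB) hbB
      (mem_of_mem_glue hJ hQ hp hB hb' hxb' hxB) hxb hxb'

theorem isSaturated_glue (hJ : Pairwise (Disjoint on J)) (hQ : Q ∈ partitionsOf A)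
    (hp : ∀ B (hB : B ∈ Q), p B hB ∈ partitionsOf (B.biUnion J)) (hB : B ∈ Q) :
    IsSaturated J (glue Q p) B := by
  intro b hb
  refine or_iff_not_imp_right.mpr fun hmeet => ?_
  obtain ⟨x, hxb, hxB⟩ := not_disjoint_iff.mp hmeet
  exact subset_of_mem_partitionsOf (hp B hB) (mem_of_mem_glue hJ hQ hp hB hb hxb hxB)

theorem filter_glue (hJ : Pairwise (Disjoint on J)) (hQ : Q ∈ partitionsOf A)
    (hp : ∀ B (hB : B ∈ Q), p B hB ∈ partitionsOf (B.biUnion J)) (hB : B ∈ Q) :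
    (glue Q p).filter (· ⊆ B.biUnion J) = p B hB := by
  ext b
  rw [mem_filter]
  refine ⟨fun ⟨hb, hbB⟩ => ?_, fun hb => ⟨mem_glue.mpr ⟨B, hB, hb⟩,
    subset_of_mem_partitionsOf (hp B hB) hb⟩⟩
  obtain ⟨B', hB', hb'⟩ := mem_glue.mp hb
  obtain ⟨x, hx⟩ := nonempty_of_mem_partitionsOf (hp B' hB') hb'
  exact mem_of_mem_glue hJ hQ hp hB hb hx (hbB hx)

theorem prod_glue {M : Type*} [CommMonoid M] (hJ : Pairwise (Disjoint on J))
    (hQ : Q ∈ partitionsOf A) (hp : ∀ B (hB : B ∈ Q), p B hB ∈ partitionsOf (B.biUnion J))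
    (f : Finset α → M) :
    ∏ b ∈ glue Q p, f b = ∏ B ∈ Q.attach, ∏ b ∈ p B.1 B.2, f b := by
  refine prod_biUnion fun B _ B' _ hne => disjoint_left.mpr fun b hb hb' => hne ?_
  obtain ⟨x, hx⟩ := nonempty_of_mem_partitionsOf (hp _ B.2) hb
  exact Subtype.ext (eq_of_mem_biUnion_of_mem_biUnion hJ hQ B.2 B'.2
    (subset_of_mem_partitionsOf (hp _ B.2) hb hx) (subset_of_mem_partitionsOf (hp _ B'.2) hb' hx))

theorem components_glue (hJne : ∀ l, (J l).Nonempty) (hJ : Pairwise (Disjoint on J))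
    (hQ : Q ∈ partitionsOf A) (hp : ∀ B (hB : B ∈ Q), p B hB ∈ connectedPartitions J B) :
    components J (glue Q p) A = Q := by
  have hp' : ∀ B (hB : B ∈ Q), p B hB ∈ partitionsOf (B.biUnion J) :=
    fun B hB => (mem_filter.mp (hp B hB)).1
  have hPA : ∀ b ∈ glue Q p, b ⊆ A.biUnion J :=
    fun b hb => subset_of_mem_partitionsOf (glue_mem_partitionsOf hJ hQ hp') hb
  have hcomp : ∀ B (hB : B ∈ Q), ∀ l ∈ B, component J (glue Q p) A l = B := by
    intro B hB l hl
    refine component_eq_of_minimal hJ hPA (subset_of_mem_partitionsOf hQ hB)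
      (isSaturated_glue hJ hQ hp' hB) hl fun C hCB hCne hC => ?_
    refine ((mem_connectedPartitions_iff hJne hJ).mp (hp B hB)).2 C hCB hCne ?_
    rw [← filter_glue hJ hQ hp' hB]
    exact hC.subset (filter_subset _ _)
  ext B
  simp only [components, mem_image]
  constructor
  · rintro ⟨l, hl, rfl⟩
    obtain ⟨B, hB, hlB⟩ := exists_mem_of_mem_partitionsOf hQ hl
    rwa [hcomp B hB l hlB]
  · intro hB
    obtain ⟨l, hl⟩ := nonempty_of_mem_partitionsOf hQ hB
    exact ⟨l, subset_of_mem_partitionsOf hQ hB hl, hcomp B hB l hl⟩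

theorem glue_filter_subset (hP : P ∈ partitionsOf (A.biUnion J))
    (hQ : Q ∈ partitionsOf A) (hsat : ∀ B ∈ Q, IsSaturated J P B) :
    glue Q (fun B _ => P.filter (· ⊆ B.biUnion J)) = P := by
  ext b
  rw [mem_glue]
  refine ⟨fun ⟨_, _, hb⟩ => (mem_filter.mp hb).1, fun hb => ?_⟩
  obtain ⟨x, hx⟩ := nonempty_of_mem_partitionsOf hP hb
  obtain ⟨l, hl, hxl⟩ := mem_biUnion.mp (subset_of_mem_partitionsOf hP hb hx)
  obtain ⟨B, hB, hlB⟩ := exists_mem_of_mem_partitionsOf hQ hl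
  refine ⟨B, hB, mem_filter.mpr ⟨hb, (hsat B hB b hb).resolve_right fun hd => ?_⟩⟩
  exact disjoint_left.mp hd hx (mem_biUnion.mpr ⟨l, hlB, hxl⟩)

variable {M : Type*} [CommSemiring M]

theorem sum_filter_components_eq (hJne : ∀ l, (J l).Nonempty) (hJ : Pairwise (Disjoint on J))
    (f : Finset α → M) (hQ : Q ∈ partitionsOf A) :
    ∑ P ∈ (partitionsOf (A.biUnion J)).filter (fun P => components J P A = Q), ∏ b ∈ P, f b =
      ∏ B ∈ Q, ∑ R ∈ connectedPartitions J B, ∏ b ∈ R, f b := by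
  have hpp {p : ∀ B ∈ Q, Finset (Finset α)} (hp : p ∈ Q.pi (connectedPartitions J)) :
      ∀ B (hB : B ∈ Q), p B hB ∈ partitionsOf (B.biUnion J) :=
    fun B hB => (mem_filter.mp (mem_pi.mp hp B hB)).1
  rw [prod_sum]
  symm
  refine sum_nbij' (fun p => glue Q p) (fun P B _ => P.filter (· ⊆ B.biUnion J))
    (fun p hp => ?_) (fun P hP => ?_) (fun p hp => ?_) (fun P hP => ?_) (fun p hp => ?_)
  · exact mem_filter.mpr ⟨glue_mem_partitionsOf hJ hQ (hpp hp),
      components_glue hJne hJ hQ (mem_pi.mp hp)⟩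
  · obtain ⟨hPart, rfl⟩ := mem_filter.mp hP
    refine mem_pi.mpr fun B hB => ?_
    obtain ⟨l, hl, rfl⟩ := mem_image.mp hB
    exact filter_subset_component_mem_connectedPartitions hJne hJ hPart hl
  · funext B hB
    exact filter_glue hJ hQ (hpp hp) hB
  · obtain ⟨hPart, rfl⟩ := mem_filter.mp hP
    refine glue_filter_subset hPart hQ fun B hB => ?_
    obtain ⟨l, -, rfl⟩ := mem_image.mp hB
    exact isSaturated_component hJ fun b hb => subset_of_mem_partitionsOf hPart hb
  · rw [prod_glue hJ hQ (hpp hp) f]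

theorem sum_partitionsOf_biUnion (hJne : ∀ l, (J l).Nonempty) (hJ : Pairwise (Disjoint on J))
    (f : Finset α → M) (A : Finset ι) :
    ∑ P ∈ partitionsOf (A.biUnion J), ∏ b ∈ P, f b =
      ∑ Q ∈ partitionsOf A, ∏ B ∈ Q, ∑ R ∈ connectedPartitions J B, ∏ b ∈ R, f b := by
  rw [← sum_fiberwise_of_maps_to fun P hP => components_mem_partitionsOf hJ hP]
  exact sum_congr rfl fun Q hQ => sum_filter_components_eq hJne hJ f hQ

end Blocks

/-- Block truncated moments expand into connected partitions: if `Tb` is the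
block truncation of the moments `m` (each block `J l` treated as one object)
and `T` the truncation of `m` on points, then `Tb univ` is the sum over all
partitions of `⋃ l, J l` that are connected with respect to the blocks
`J 1, …, J m` of the products of truncated moments. -/
theorem block_truncation_eq_sum_connected (mm : ℕ) (hmm : 0 < mm)
    (J : Fin mm → Finset ℕ) (hJne : ∀ l, (J l).Nonempty)
    (hdisj : ∀ l l', l ≠ l' → J l ∩ J l' = ∅)
    (m T : Finset ℕ → ℝ)
    (hT : ∀ S : Finset ℕ, S.Nonempty → m S = ∑ P ∈ partitionsOf S, ∏ b ∈ P, T b)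
    (Tb : Finset (Fin mm) → ℝ)
    (hTb : ∀ A : Finset (Fin mm), A.Nonempty →
      m (A.biUnion J) = ∑ Q ∈ partitionsOf A, ∏ B ∈ Q, Tb B) :
    Tb Finset.univ =
      ∑ P ∈ (partitionsOf (Finset.univ.biUnion J)).filter
          (fun P => ¬ ∃ S ∈ P.powerset, ∃ B ∈ (Finset.univ : Finset (Fin mm)).powerset,
            S.Nonempty ∧ S ≠ P ∧ B.Nonempty ∧ B ≠ Finset.univ ∧
              S.biUnion id = B.biUnion J),
        ∏ b ∈ P, T b := by
  have hJ : Pairwise (Function.onFun Disjoint J) :=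
    fun l l' h => Finset.disjoint_iff_inter_eq_empty.mpr (hdisj l l' h)
  refine eq_of_sum_prod_partitionsOf_eq
    (g := fun A => ∑ P ∈ Blocks.connectedPartitions J A, ∏ b ∈ P, T b) (fun A hA => ?_)
    ⟨⟨0, hmm⟩, Finset.mem_univ _⟩
  rw [← hTb A hA, hT _ (hA.biUnion fun l _ => hJne l), Blocks.sum_partitionsOf_biUnion hJne hJ]
end

section
/- The Wick ordered monomial :X: defined recursively by :X: = X - ⟨X⟩ - Σ_{partitions {I_1,…,I_k} of X with k > 1} Σ_{j=1}^k :I_j: Π_{l ≠ j} ⟨I_l⟩^T (with :X: = X - ⟨X⟩ for |X| = 1) is the unique L²(ν₀)-random variable satisfying ⟨:X: Y⟩ = ⟨X Y⟩^{(T)} for all Y ∈ L²(ν₀), where ⟨X Y⟩^{(T)} is the k = 1 term (the term with the single block I_1 = X) in the expansion ⟨X Y⟩ = Σ_{I ∈ P(X)} Σ_{j=1}^{k} ⟨I_j Y⟩^{(T)} Π_{l≠j} ⟨I_l⟩^T + ⟨Y⟩ Σ_{I ∈ P(X)} Π_l ⟨I_l⟩^T, with I = {I_1,…,I_k} ranging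 over the partitions P(X) of X. -/
open scoped BigOperators

namespace WickAux

variable {J b : Finset ℕ} {P : Finset (Finset ℕ)}

lemma mem_pof (h : P ∈ partitionsOf J) :
    ∅ ∉ P ∧ (∀ a ∈ P, ∀ b ∈ P, a ≠ b → a ∩ b = ∅) ∧ P.biUnion id = J :=
  (Finset.mem_filter.mp h).2

lemma block_subset (h : P ∈ partitionsOf J) (hb : b ∈ P) : b ⊆ J := by
  have h2 := (mem_pof h).2.2
  calc b ⊆ P.biUnion id := Finset.subset_biUnion_of_mem id hb
    _ = J := h2

lemma block_nonempty (h : P ∈ partitionsOf J) (hb : b ∈ P) : b.Nonempty := by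
  rcases Finset.eq_empty_or_nonempty b with rfl | h'
  · exact absurd hb (mem_pof h).1
  · exact h'

lemma block_ssubset (h : P ∈ partitionsOf J) (hb : b ∈ P) (h2 : 1 < P.card) : b ⊂ J := by
  obtain ⟨b', hb', hne⟩ := Finset.exists_mem_ne h2 b
  obtain ⟨x, hx⟩ := block_nonempty h hb'
  refine (Finset.ssubset_iff_of_subset (block_subset h hb)).mpr
    ⟨x, block_subset h hb' hx, fun hxb => ?_⟩
  have hd := (mem_pof h).2.1 b' hb' b hb hne
  have : x ∈ b' ∩ b := Finset.mem_inter.mpr ⟨hx, hxb⟩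
  simp [hd] at this

lemma singleton_mem_pof (hJ : J.Nonempty) : {J} ∈ partitionsOf J := by
  refine Finset.mem_filter.mpr ⟨?_, ?_, ?_, ?_⟩
  · simp
  · simp [Finset.ne_empty_of_mem hJ.choose_spec]
    exact fun h => absurd h.symm (Finset.ne_empty_of_mem hJ.choose_spec)
  · intro a ha bb hbb hne
    simp at ha hbb
    exact absurd (ha.trans hbb.symm) hne
  · simp

lemma pof_eq_singleton (hJ : J.Nonempty) (hP : P ∈ partitionsOf J) (h : ¬ 1 < P.card) :
    P = {J} := by
  have hne : P.Nonempty := by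
    rcases Finset.eq_empty_or_nonempty P with rfl | h'
    · have := (mem_pof hP).2.2
      simp at this
      exact absurd this.symm hJ.ne_empty
    · exact h'
  have hcard : P.card = 1 := by
    have := hne.card_pos; omega
  obtain ⟨c, rfl⟩ := Finset.card_eq_one.mp hcard
  have := (mem_pof hP).2.2
  simp at this
  rw [this]

lemma filter_empty_of_card_one (hJ : J.card = 1) :
    (partitionsOf J).filter (fun P => 1 < P.card) = ∅ := by
  rw [Finset.filter_eq_empty_iff]
  intro P hP h2
  have hpos : 0 < P.card := by omega
  obtain ⟨c, hc⟩ := Finset.card_pos.mp hpos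
  have hss := block_ssubset hP hc h2
  have hlt : c.card < 1 := hJ ▸ Finset.card_lt_card hss
  have : c = ∅ := Finset.card_eq_zero.mp (by omega)
  exact (mem_pof hP).1 (this ▸ hc)

lemma sum_pof_split (hJ : J.Nonempty) (f : Finset (Finset ℕ) → ℝ) :
    ∑ P ∈ partitionsOf J, f P
      = f {J} + ∑ P ∈ (partitionsOf J).filter (fun P => 1 < P.card), f P := by
  have hfil : (partitionsOf J).filter (fun P => ¬ 1 < P.card) = {{J}} := by
    ext P
    simp only [Finset.mem_filter, Finset.mem_singleton]
    constructor
    · rintro ⟨hP, h⟩; exact pof_eq_singleton hJ hP h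
    · rintro rfl; exact ⟨singleton_mem_pof hJ, by simp⟩
  rw [← Finset.sum_filter_add_sum_filter_not (partitionsOf J) (fun P => 1 < P.card) f, hfil,
    Finset.sum_singleton, add_comm]

noncomputable def TYaux (c : Finset ℕ → ℝ) (e : ℝ) (T : Finset ℕ → ℝ) :
    ℕ → Finset ℕ → ℝ
  | 0, _ => 0
  | (n+1), J => c J - e * (∑ P ∈ partitionsOf J, ∏ b ∈ P, T b)
      - ∑ P ∈ (partitionsOf J).filter (fun P => 1 < P.card),
          ∑ b ∈ P, TYaux c e T n b * ∏ l ∈ P.erase b, T l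

lemma TYaux_stable (c : Finset ℕ → ℝ) (e : ℝ) (T : Finset ℕ → ℝ) :
    ∀ k, ∀ J : Finset ℕ, J.Nonempty → J.card ≤ k →
      ∀ n m, J.card ≤ n → J.card ≤ m → TYaux c e T n J = TYaux c e T m J := by
  intro k
  induction k with
  | zero => intro J hJ hk; have := hJ.card_pos; omega
  | succ k ih =>
    intro J hJ hk n m hn hm
    have h1 : 1 ≤ J.card := hJ.card_pos
    obtain ⟨n', rfl⟩ : ∃ n', n = n' + 1 := ⟨n - 1, by omega⟩
    obtain ⟨m', rfl⟩ : ∃ m', m = m' + 1 := ⟨m - 1, by omega⟩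
    simp only [TYaux]
    congr 1
    apply Finset.sum_congr rfl
    intro P hP
    apply Finset.sum_congr rfl
    intro b hb
    have hPm := Finset.mem_filter.mp hP
    have hlt : b.card < J.card := Finset.card_lt_card (block_ssubset hPm.1 hb hPm.2)
    have := ih b (block_nonempty hPm.1 hb) (by omega) n' m' (by omega) (by omega)
    rw [this]

noncomputable def TYg (c : Finset ℕ → ℝ) (e : ℝ) (T : Finset ℕ → ℝ) (J : Finset ℕ) : ℝ :=
  TYaux c e T J.card J

lemma TYg_spec (c : Finset ℕ → ℝ) (e : ℝ) (T : Finset ℕ → ℝ) (J : Finset ℕ)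
    (hJ : J.Nonempty) :
    c J = (∑ P ∈ partitionsOf J, ∑ b ∈ P, TYg c e T b * ∏ l ∈ P.erase b, T l)
      + e * ∑ P ∈ partitionsOf J, ∏ b ∈ P, T b := by
  rw [sum_pof_split hJ (fun P => ∑ b ∈ P, TYg c e T b * ∏ l ∈ P.erase b, T l)]
  have h1 : ∑ b ∈ ({J} : Finset (Finset ℕ)), TYg c e T b * ∏ l ∈ ({J} : Finset (Finset ℕ)).erase b, T l
      = TYg c e T J := by simp
  rw [h1]
  obtain ⟨k, hk⟩ : ∃ k, J.card = k + 1 := ⟨J.card - 1, by have := hJ.card_pos; omega⟩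
  have hexp : TYg c e T J = c J - e * (∑ P ∈ partitionsOf J, ∏ b ∈ P, T b)
      - ∑ P ∈ (partitionsOf J).filter (fun P => 1 < P.card),
          ∑ b ∈ P, TYg c e T b * ∏ l ∈ P.erase b, T l := by
    unfold TYg
    rw [hk]
    simp only [TYaux]
    congr 1
    apply Finset.sum_congr rfl
    intro P hP
    apply Finset.sum_congr rfl
    intro b hb
    have hPm := Finset.mem_filter.mp hP
    have hlt : b.card < J.card := Finset.card_lt_card (block_ssubset hPm.1 hb hPm.2)
    have := TYaux_stable c e T b.card b (block_nonempty hPm.1 hb) le_rfl k b.card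
      (by omega) le_rfl
    rw [this]
  rw [hexp]
  ring

end WickAux

open WickAux in
/-- The recursively defined Wick ordered monomial `:X:` is the unique element
whose pairing with every `Y` is the `(T)`-truncated moment `⟨X Y⟩^{(T)}`,
where `Y` is treated as a single object. Here `A` is a commutative algebra of
random variables, `E` the expectation functional, `φ` the field variables,
`T` the truncated moments, `W J = :∏_{j ∈ J} φ j:` the Wick monomials, and for
a given `Y` the function `TY` (i.e. `TY J = ⟨J Y⟩^{(T)}`) is characterized by
the decomposition `⟨J Y⟩ = Σ_{P ∈ P(J)} Σ_{b ∈ P} TY b ∏_{l ∈ P, l ≠ b} T l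
+ ⟨Y⟩ Σ_{P ∈ P(J)} ∏_{l ∈ P} T l`. -/
theorem wick_monomial_pairing_and_unique {A : Type*} [CommRing A] [Algebra ℝ A]
    (E : A →ₗ[ℝ] ℝ) (φ : ℕ → A) (T : Finset ℕ → ℝ)
    (hT : ∀ J : Finset ℕ, J.Nonempty →
      E (∏ j ∈ J, φ j) = ∑ P ∈ partitionsOf J, ∏ b ∈ P, T b)
    (W : Finset ℕ → A)
    (hW1 : ∀ J : Finset ℕ, J.card = 1 →
      W J = (∏ j ∈ J, φ j) - algebraMap ℝ A (E (∏ j ∈ J, φ j)))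
    (hWrec : ∀ J : Finset ℕ, 1 < J.card →
      W J = (∏ j ∈ J, φ j) - algebraMap ℝ A (E (∏ j ∈ J, φ j)) -
        ∑ P ∈ (partitionsOf J).filter (fun P => 1 < P.card),
          ∑ b ∈ P, (∏ l ∈ P.erase b, T l) • W b)
    (hnondeg : ∀ a : A, (∀ Y : A, E (a * Y) = 0) → a = 0)
    (X : Finset ℕ) (hX : X.Nonempty) :
    (∀ (Y : A) (TY : Finset ℕ → ℝ),
      (∀ J : Finset ℕ, J.Nonempty →
        E ((∏ j ∈ J, φ j) * Y) =
          (∑ P ∈ partitionsOf J, ∑ b ∈ P, TY b * ∏ l ∈ P.erase b, T l) +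
            E Y * ∑ P ∈ partitionsOf J, ∏ b ∈ P, T b) →
      E (W X * Y) = TY X) ∧
    (∀ a : A,
      (∀ (Y : A) (TY : Finset ℕ → ℝ),
        (∀ J : Finset ℕ, J.Nonempty →
          E ((∏ j ∈ J, φ j) * Y) =
            (∑ P ∈ partitionsOf J, ∑ b ∈ P, TY b * ∏ l ∈ P.erase b, T l) +
              E Y * ∑ P ∈ partitionsOf J, ∏ b ∈ P, T b) →
        E (a * Y) = TY X) →
      a = W X) := by
  have halg : ∀ (r : ℝ) (Y : A), E (algebraMap ℝ A r * Y) = r * E Y := by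
    intro r Y
    rw [← Algebra.smul_def, map_smul, smul_eq_mul]
  have key : ∀ n (Z : Finset ℕ), Z.card ≤ n → Z.Nonempty →
      ∀ (Y : A) (TY : Finset ℕ → ℝ),
        (∀ J : Finset ℕ, J.Nonempty →
          E ((∏ j ∈ J, φ j) * Y) =
            (∑ P ∈ partitionsOf J, ∑ b ∈ P, TY b * ∏ l ∈ P.erase b, T l) +
              E Y * ∑ P ∈ partitionsOf J, ∏ b ∈ P, T b) →
        E (W Z * Y) = TY Z := by
    intro n
    induction n with
    | zero => intro Z h0 hZ; have := hZ.card_pos; omega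
    | succ n ih =>
      intro Z hcard hZ Y TY hTY
      have h1 : 1 ≤ Z.card := hZ.card_pos
      rcases eq_or_lt_of_le h1 with hc1 | hc2
      · -- card = 1
        rw [hW1 Z hc1.symm, sub_mul, map_sub, halg, hTY Z hZ, hT Z hZ,
          sum_pof_split hZ (fun P => ∑ b ∈ P, TY b * ∏ l ∈ P.erase b, T l),
          filter_empty_of_card_one hc1.symm]
        simp
        ring
      · -- 1 < card
        rw [hWrec Z hc2, sub_mul, sub_mul, map_sub, map_sub, Finset.sum_mul, map_sum]
        have hsum : ∀ P ∈ (partitionsOf Z).filter (fun P => 1 < P.card),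
            E ((∑ b ∈ P, (∏ l ∈ P.erase b, T l) • W b) * Y)
              = ∑ b ∈ P, TY b * ∏ l ∈ P.erase b, T l := by
          intro P hP
          rw [Finset.sum_mul, map_sum]
          apply Finset.sum_congr rfl
          intro b hb
          rw [smul_mul_assoc, map_smul, smul_eq_mul]
          have hPm := Finset.mem_filter.mp hP
          have hlt : b.card < Z.card := Finset.card_lt_card (block_ssubset hPm.1 hb hPm.2)
          rw [ih b (by omega) (block_nonempty hPm.1 hb) Y TY hTY]
          ring
        rw [Finset.sum_congr rfl hsum, halg, hTY Z hZ, hT Z hZ,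
          sum_pof_split hZ (fun P => ∑ b ∈ P, TY b * ∏ l ∈ P.erase b, T l)]
        simp
        ring
  constructor
  · intro Y TY hTY
    exact key X.card X le_rfl hX Y TY hTY
  · intro a ha
    have hzero : ∀ Y : A, E ((a - W X) * Y) = 0 := by
      intro Y
      have hspec : ∀ J : Finset ℕ, J.Nonempty →
          E ((∏ j ∈ J, φ j) * Y) =
            (∑ P ∈ partitionsOf J, ∑ b ∈ P,
                TYg (fun J' => E ((∏ j ∈ J', φ j) * Y)) (E Y) T b * ∏ l ∈ P.erase b, T l) +
              E Y * ∑ P ∈ partitionsOf J, ∏ b ∈ P, T b := by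
        intro J hJ
        exact TYg_spec (fun J' => E ((∏ j ∈ J', φ j) * Y)) (E Y) T J hJ
      have h1 := ha Y (TYg (fun J' => E ((∏ j ∈ J', φ j) * Y)) (E Y) T) hspec
      have h2 := key X.card X le_rfl hX Y (TYg (fun J' => E ((∏ j ∈ J', φ j) * Y)) (E Y) T) hspec
      rw [sub_mul, map_sub, h1, h2, sub_self]
    have := hnondeg (a - W X) hzero
    exact sub_eq_zero.mp this
end

section
/- Let I : (ℝ^d)^m → ℝ be translation invariant (I(y_1 + a, …, y_m + a) = I(y_1,…,y_m)) and satisfy |I(y_1,…,y_m)| ≤ C exp(-M Σ_{l=2}^m |y_l - y_1|) for some C, M > 0. Then as Λ ↗ ℝ^d in the sense of Van Hove, (1/|Λ|) ∫_{Λ^m} I(y_1,…,y_m) dy_1⋯dy_m → ∫_{(ℝ^d)^{m-1}} I(0, y_2, …, y_m) dy_2⋯dy_m. -/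
/-!
Substituting `y = (a, a + v₁, …, a + vₘ)` and using translation invariance gives
`∫_{Λ^{m+1}} I = ∫ I(0, v) |A_Λ(v)| dv`, where `A_Λ(v) = Λ ∩ ⋂ₗ (Λ - vₗ)` is the set of
anchors `a` keeping the whole configuration inside `Λ`. A point of `Λ` outside `A_Λ(v)` lies
within `‖vₗ‖` of `∂Λ` for some `l`, because the segment from `a` to `a + vₗ` leaves `Λ`; hence
`|A_Λ(v)| / |Λ| → 1` by the Van Hove condition, and dominated convergence with the majorant
`|I(0, v)|`, integrable by the exponential decay, yields the limit.
-/

open MeasureTheory Filter Topology Asymptotics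

section Decay

variable {E : Type*} [NormedAddCommGroup E] [NormedSpace ℝ E] [FiniteDimensional ℝ E]
  [MeasurableSpace E] [BorelSpace E] (μ : Measure E) [μ.IsAddHaarMeasure]

theorem integrable_exp_neg_mul_norm {M : ℝ} (hM : 0 < M) :
    Integrable (fun x : E => Real.exp (-M * ‖x‖)) μ := by
  set r : ℝ := Module.finrank ℝ E + 1
  have h_one_add : Tendsto (fun x : E => 1 + ‖x‖) (cocompact E) atTop :=
    tendsto_atTop_add_const_left _ 1 tendsto_norm_cocompact_atTop
  have hO : (fun x : E => Real.exp (-M * ‖x‖)) =O[cocompact E] fun x => (1 + ‖x‖) ^ (-r) := by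
    refine (((isLittleO_exp_neg_mul_rpow_atTop hM (-r)).comp_tendsto
      h_one_add).isBigO.const_mul_left (Real.exp M)).congr_left fun x => ?_
    rw [Function.comp_apply, ← Real.exp_add]
    ring_nf
  exact (Continuous.locallyIntegrable (by fun_prop)).integrable_of_isBigO_cocompact hO
    ((integrable_one_add_norm (by simp [r])).integrableAtFilter _)

theorem integrable_exp_neg_mul_sum_norm {ι : Type*} [Fintype ι] {M : ℝ} (hM : 0 < M) :
    Integrable (fun v : ι → E => Real.exp (-M * ∑ l, ‖v l‖)) (Measure.pi fun _ => μ) := by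
  simp_rw [Finset.mul_sum, Real.exp_sum]
  exact Integrable.fintype_prod fun _ => integrable_exp_neg_mul_norm μ hM

end Decay

theorem IsPreconnected.inter_frontier_nonempty {X : Type*} [TopologicalSpace X] {s t : Set X}
    (ht : IsPreconnected t) (hts : (t ∩ s).Nonempty) (hts' : (t \ s).Nonempty) :
    (t ∩ frontier s).Nonempty := by
  by_contra! h
  have hcover : t ⊆ interior s ∪ interior sᶜ := fun y hy => by
    rw [← compl_frontier_eq_union_interior]
    exact fun hf => h.subset ⟨hy, hf⟩
  obtain ⟨x, hxt, hxs⟩ := hts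
  obtain ⟨z, hzt, hzs⟩ := hts'
  obtain ⟨y, -, hy, hy'⟩ := ht _ _ isOpen_interior isOpen_interior hcover
    ⟨x, hxt, (hcover hxt).resolve_right fun h => interior_subset h hxs⟩
    ⟨z, hzt, (hcover hzt).resolve_left fun h => hzs (interior_subset h)⟩
  exact interior_subset hy' (interior_subset hy)

theorem Metric.infDist_frontier_le_norm {E : Type*} [NormedAddCommGroup E] [NormedSpace ℝ E]
    {s : Set E} {x u : E} (hx : x ∈ s) (hux : u + x ∉ s) :
    Metric.infDist x (frontier s) ≤ ‖u‖ := by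
  obtain ⟨w, hw_seg, hw⟩ := (convex_segment x (u + x)).isPreconnected.inter_frontier_nonempty
    ⟨x, left_mem_segment ℝ _ _, hx⟩ ⟨u + x, right_mem_segment ℝ _ _, hux⟩
  calc Metric.infDist x (frontier s) ≤ dist x w := Metric.infDist_le_dist_of_mem hw
    _ ≤ dist x (u + x) := by
        linarith [dist_add_dist_of_mem_segment hw_seg, dist_nonneg (x := w) (y := u + x)]
    _ = ‖u‖ := by simp [dist_eq_norm]

theorem measurable_finCons {α : Type*} [MeasurableSpace α] {m : ℕ} (x : α) :
    Measurable fun v : Fin m → α => (Fin.cons x v : Fin (m + 1) → α) :=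
  measurable_pi_iff.2 fun j => by cases j using Fin.cases <;> simp [measurable_pi_apply]

theorem Fin.cons_zero_add_const {G : Type*} [AddZeroClass G] {m : ℕ} (v : Fin m → G) (a : G) :
    (fun j => (Fin.cons 0 v : Fin (m + 1) → G) j + a) = Fin.cons a (fun l => v l + a) := by
  ext j
  cases j using Fin.cases <;> simp

section Anchors

variable {G ι : Type*}

def anchorSet [Add G] (Λ : Set G) (v : ι → G) : Set G := Λ ∩ ⋂ l, (v l + ·) ⁻¹' Λ

theorem anchorSet_subset [Add G] (Λ : Set G) (v : ι → G) : anchorSet Λ v ⊆ Λ :=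
  Set.inter_subset_left

theorem measureReal_anchorSet_div_le_one [Add G] [MeasurableSpace G] (μ : Measure G)
    {Λ : Set G} (hΛ : μ Λ ≠ ⊤) (v : ι → G) : μ.real (anchorSet Λ v) / μ.real Λ ≤ 1 :=
  div_le_one_of_le₀ (measureReal_mono (anchorSet_subset Λ v) hΛ) measureReal_nonneg

theorem cons_add_mem_pi_iff_mem_anchorSet [Add G] {m : ℕ} {Λ : Set G} (a : G)
    (v : Fin m → G) :
    (Fin.cons a (fun l => v l + a) : Fin (m + 1) → G) ∈ Set.univ.pi (fun _ => Λ) ↔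
      a ∈ anchorSet Λ v := by
  simp [Fin.forall_fin_succ, anchorSet]

variable [AddCommGroup G] [MeasurableSpace G] [MeasurableAdd₂ G] [Countable ι]

theorem measurableSet_anchorSet {Λ : Set G} (hΛ : MeasurableSet Λ) (v : ι → G) :
    MeasurableSet (anchorSet Λ v) :=
  hΛ.inter (.iInter fun l => measurable_const_add (v l) hΛ)

theorem measurable_measure_anchorSet (μ : Measure G) [SFinite μ] {Λ : Set G}
    (hΛ : MeasurableSet Λ) : Measurable fun v : ι → G => μ (anchorSet Λ v) := by
  have hW : MeasurableSet {p : G × (ι → G) | p.1 ∈ anchorSet Λ p.2} := by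
    simp only [anchorSet, Set.mem_inter_iff, Set.mem_iInter, Set.mem_preimage, Set.ofPred_and,
      Set.ofPred_forall]
    exact (measurable_fst hΛ).inter
      (.iInter fun l => (by fun_prop : Measurable fun p : G × (ι → G) => p.2 l + p.1) hΛ)
  exact measurable_measure_prodMk_right hW

end Anchors

section ChangeOfVariables

variable {G : Type*} [AddCommGroup G] [MeasurableSpace G] [MeasurableAdd₂ G]
  (μ : Measure G) [SigmaFinite μ] [μ.IsAddRightInvariant]

theorem measurePreserving_cons_add (m : ℕ) :
    MeasurePreserving
      (fun p : G × (Fin m → G) => (Fin.cons p.1 (fun l => p.2 l + p.1) : Fin (m + 1) → G))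
      (μ.prod (Measure.pi fun _ => μ)) (Measure.pi fun _ => μ) := by
  have hshear : MeasurePreserving (fun p : G × (Fin m → G) => (p.1, fun l => p.2 l + p.1))
      (μ.prod (Measure.pi fun _ => μ)) (μ.prod (Measure.pi fun _ => μ)) :=
    (MeasurePreserving.id μ).skew_product (by fun_prop) (ae_of_all _ fun a =>
      (measurePreserving_add_right (Measure.pi fun _ => μ) fun _ => a).map_eq)
  convert ((measurePreserving_piFinSuccAbove (fun _ : Fin (m + 1) => μ) 0).symm _).comp hshear
    using 1
  ext p : 1
  simp [MeasurableEquiv.piFinSuccAbove_symm_apply]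
  rfl

theorem setIntegral_pi_eq_integral_mul_measureReal_anchorSet {m : ℕ}
    {I : (Fin (m + 1) → G) → ℝ} (hI : Measurable I)
    (htrans : ∀ (y : Fin (m + 1) → G) (a : G), I (fun l => y l + a) = I y)
    {Λ : Set G} (hΛ : MeasurableSet Λ) (hΛ_fin : μ Λ ≠ ⊤)
    (hint : Integrable (fun v => I (Fin.cons 0 v)) (Measure.pi fun _ => μ)) :
    ∫ y in Set.univ.pi (fun _ => Λ), I y ∂(Measure.pi fun _ => μ) =
      ∫ v, I (Fin.cons 0 v) * μ.real (anchorSet Λ v) ∂(Measure.pi fun _ => μ) := by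
  have hT := measurePreserving_cons_add μ m
  have hpi : MeasurableSet (Set.univ.pi fun _ : Fin (m + 1) => Λ) := .univ_pi fun _ => hΛ
  have hF : ∀ a v, (Set.univ.pi fun _ => Λ).indicator I (Fin.cons a fun l => v l + a) =
      (anchorSet Λ v).indicator (fun _ => I (Fin.cons 0 v)) a := fun a v => by
    by_cases ha : a ∈ anchorSet Λ v
    · rw [Set.indicator_of_mem ((cons_add_mem_pi_iff_mem_anchorSet a v).2 ha),
        Set.indicator_of_mem ha, ← Fin.cons_zero_add_const, htrans]
    · rw [Set.indicator_of_notMem (mt (cons_add_mem_pi_iff_mem_anchorSet a v).1 ha),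
        Set.indicator_of_notMem ha]
  have hF_int : Integrable (fun p : G × (Fin m → G) =>
      (Set.univ.pi fun _ => Λ).indicator I (Fin.cons p.1 fun l => p.2 l + p.1))
      (μ.prod (Measure.pi fun _ => μ)) := by
    refine (((integrable_indicator_iff hΛ).2
      (integrableOn_const (C := (1 : ℝ)) hΛ_fin)).mul_prod hint.norm).mono'
      ((hI.indicator hpi).comp hT.measurable).aestronglyMeasurable (ae_of_all _ fun ⟨a, v⟩ => ?_)
    rw [hF]
    by_cases ha : a ∈ anchorSet Λ v
    · simp [ha, anchorSet_subset Λ v ha]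
    · rw [Set.indicator_of_notMem ha, norm_zero]
      exact mul_nonneg (Set.indicator_nonneg (fun _ _ => zero_le_one) a) (norm_nonneg _)
  calc ∫ y in Set.univ.pi (fun _ => Λ), I y ∂(Measure.pi fun _ => μ)
      = ∫ p : G × (Fin m → G),
          (Set.univ.pi fun _ => Λ).indicator I (Fin.cons p.1 fun l => p.2 l + p.1)
          ∂(μ.prod (Measure.pi fun _ => μ)) := by
        rw [← integral_indicator hpi, ← hT.map_eq,
          integral_map hT.measurable.aemeasurable (hI.indicator hpi).aestronglyMeasurable]
    _ = ∫ v, ∫ a, (anchorSet Λ v).indicator (fun _ => I (Fin.cons 0 v)) a ∂μ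
          ∂(Measure.pi fun _ => μ) := by
        rw [integral_prod_symm _ hF_int]
        simp only [hF]
    _ = ∫ v, I (Fin.cons 0 v) * μ.real (anchorSet Λ v) ∂(Measure.pi fun _ => μ) := by
        simp only [integral_indicator_const _ (measurableSet_anchorSet hΛ _), smul_eq_mul,
          mul_comm]

end ChangeOfVariables

section VanHove

variable {E ι : Type*} [NormedAddCommGroup E] [NormedSpace ℝ E]

/-- The paper's `∂_r Λ`. -/
def boundaryLayer (Λ : Set E) (r : ℝ) : Set E := {y ∈ Λ | Metric.infDist y (frontier Λ) < r}

theorem diff_anchorSet_subset_boundaryLayer {Λ : Set E} {v : ι → E} {r : ℝ}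
    (hv : ∀ l, ‖v l‖ < r) : Λ \ anchorSet Λ v ⊆ boundaryLayer Λ r := by
  rintro y ⟨hy, hy_anchor⟩
  obtain ⟨l, hl⟩ : ∃ l, v l + y ∉ Λ := by
    by_contra! h
    exact hy_anchor ⟨hy, Set.mem_iInter.2 h⟩
  exact ⟨hy, (Metric.infDist_frontier_le_norm hy hl).trans_lt (hv l)⟩

variable [MeasurableSpace E] (μ : Measure E)

theorem one_sub_measureReal_boundaryLayer_div_le {Λ : Set E} (hΛ : μ Λ ≠ ⊤)
    (hΛ_pos : 0 < μ.real Λ) {v : ι → E} {r : ℝ} (hv : ∀ l, ‖v l‖ < r) :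
    1 - μ.real (boundaryLayer Λ r) / μ.real Λ ≤ μ.real (anchorSet Λ v) / μ.real Λ := by
  have hcover : Λ ⊆ anchorSet Λ v ∪ boundaryLayer Λ r := fun y hy => by
    by_cases h : y ∈ anchorSet Λ v
    · exact Or.inl h
    · exact Or.inr (diff_anchorSet_subset_boundaryLayer hv ⟨hy, h⟩)
  have hfin : μ (anchorSet Λ v ∪ boundaryLayer Λ r) ≠ ⊤ :=
    measure_ne_top_of_subset (Set.union_subset (anchorSet_subset Λ v) fun _ hy => hy.1) hΛ
  have hle := (measureReal_mono hcover hfin).trans (measureReal_union_le _ _)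
  rw [one_sub_div hΛ_pos.ne']
  exact div_le_div_of_nonneg_right (by linarith) hΛ_pos.le

theorem tendsto_measureReal_anchorSet_div [Fintype ι] {α : Type*} {l : Filter α}
    {Λ : α → Set E} (hfin : ∀ n, μ (Λ n) ≠ ⊤) (hpos : ∀ n, 0 < μ (Λ n))
    (hVH : ∀ r : ℝ, 0 < r →
      Tendsto (fun n => μ.real (boundaryLayer (Λ n) r) / μ.real (Λ n)) l (𝓝 0))
    (v : ι → E) :
    Tendsto (fun n => μ.real (anchorSet (Λ n) v) / μ.real (Λ n)) l (𝓝 1) := by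
  set r := ∑ l, ‖v l‖ + 1
  have hv : ∀ l, ‖v l‖ < r := fun l => by
    linarith [Finset.single_le_sum (fun j _ => norm_nonneg (v j)) (Finset.mem_univ l)]
  have hΛ_pos : ∀ n, 0 < μ.real (Λ n) := fun n => ENNReal.toReal_pos (hpos n).ne' (hfin n)
  exact tendsto_of_tendsto_of_tendsto_of_le_of_le
    (by simpa using (hVH r (by positivity)).const_sub 1) tendsto_const_nhds
    (fun n => one_sub_measureReal_boundaryLayer_div_le μ (hfin n) (hΛ_pos n) hv)
    (fun n => measureReal_anchorSet_div_le_one μ (hfin n) v)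

end VanHove

theorem van_hove_thermodynamic_limit_general (d m : ℕ)
    (I : (Fin (m + 1) → EuclideanSpace ℝ (Fin d)) → ℝ)
    (hImeas : Measurable I)
    (htrans : ∀ (y : Fin (m + 1) → EuclideanSpace ℝ (Fin d))
      (a : EuclideanSpace ℝ (Fin d)), I (fun l => y l + a) = I y)
    (C M : ℝ) (hM : 0 < M)
    (hbound : ∀ y : Fin (m + 1) → EuclideanSpace ℝ (Fin d),
      |I y| ≤ C * Real.exp (-M * ∑ l : Fin m, ‖y l.succ - y 0‖))
    (Λ : ℕ → Set (EuclideanSpace ℝ (Fin d)))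
    (hmeasΛ : ∀ n, MeasurableSet (Λ n))
    (hbdd : ∀ n, Bornology.IsBounded (Λ n))
    (hpos : ∀ n, 0 < volume (Λ n))
    (hVH : ∀ a : ℝ, 0 < a → Tendsto
      (fun n => (volume {y ∈ Λ n | Metric.infDist y (frontier (Λ n)) < a}).toReal /
        (volume (Λ n)).toReal) atTop (nhds 0)) :
    Tendsto
      (fun n => (∫ y in Set.univ.pi (fun _ : Fin (m + 1) => Λ n), I y) /
        (volume (Λ n)).toReal)
      atTop
      (nhds (∫ v : Fin m → EuclideanSpace ℝ (Fin d), I (Fin.cons 0 v))) := by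
  set g := fun v : Fin m → EuclideanSpace ℝ (Fin d) => I (Fin.cons 0 v)
  have hfin : ∀ n, volume (Λ n) ≠ ⊤ := fun n => (hbdd n).measure_lt_top.ne
  have hg_meas : Measurable g := hImeas.comp (measurable_finCons 0)
  have hg_int : Integrable g :=
    ((integrable_exp_neg_mul_sum_norm volume hM).const_mul C).mono'
      hg_meas.aestronglyMeasurable (ae_of_all _ fun v => by simpa using hbound (Fin.cons 0 v))
  have hratio : ∀ n, (∫ y in Set.univ.pi (fun _ : Fin (m + 1) => Λ n), I y) /
      (volume (Λ n)).toReal =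
        ∫ v, g v * (volume.real (anchorSet (Λ n) v) / volume.real (Λ n)) := fun n => by
    calc _ = (∫ v, g v * volume.real (anchorSet (Λ n) v)) / volume.real (Λ n) :=
          congrArg (· / _) (setIntegral_pi_eq_integral_mul_measureReal_anchorSet volume hImeas
            htrans (hmeasΛ n) (hfin n) hg_int)
      _ = _ := by simp_rw [← integral_div, mul_div_assoc]
  simp only [hratio]
  refine tendsto_integral_of_dominated_convergence (fun v => ‖g v‖) (fun n =>
      (hg_meas.mul ((measurable_measure_anchorSet volume (hmeasΛ n)).ennreal_toReal.div_const
        _)).aestronglyMeasurable) hg_int.norm (fun n => ae_of_all _ fun v => ?_)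
    (ae_of_all _ fun v => by
      simpa using (tendsto_measureReal_anchorSet_div volume hfin hpos hVH v).const_mul (g v))
  rw [norm_mul]
  refine mul_le_of_le_one_right (norm_nonneg _) ?_
  rw [Real.norm_of_nonneg (by positivity)]
  exact measureReal_anchorSet_div_le_one _ (hfin n) v

/-- Thermodynamic limit for integrals of translation invariant, exponentially
decaying integrands: if `Λₙ ↗ ℝ^d` in the sense of Van Hove, then
`|Λₙ|⁻¹ ∫_{Λₙ^m} I → ∫_{(ℝ^d)^{m-1}} I(0, y₂, …, yₘ)`. -/
theorem van_hove_thermodynamic_limit (d m : ℕ) (hd : 0 < d)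
    (I : (Fin (m + 1) → EuclideanSpace ℝ (Fin d)) → ℝ)
    (hImeas : Measurable I)
    (htrans : ∀ (y : Fin (m + 1) → EuclideanSpace ℝ (Fin d))
      (a : EuclideanSpace ℝ (Fin d)), I (fun l => y l + a) = I y)
    (C M : ℝ) (hC : 0 < C) (hM : 0 < M)
    (hbound : ∀ y : Fin (m + 1) → EuclideanSpace ℝ (Fin d),
      |I y| ≤ C * Real.exp (-M * ∑ l : Fin m, ‖y l.succ - y 0‖))
    (Λ : ℕ → Set (EuclideanSpace ℝ (Fin d)))
    (hmeasΛ : ∀ n, MeasurableSet (Λ n))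
    (hbdd : ∀ n, Bornology.IsBounded (Λ n))
    (hpos : ∀ n, 0 < volume (Λ n))
    (hVH : ∀ a : ℝ, 0 < a → Tendsto
      (fun n => (volume {y ∈ Λ n | Metric.infDist y (frontier (Λ n)) < a}).toReal /
        (volume (Λ n)).toReal) atTop (nhds 0))
    (hball : ∀ R : ℝ, 0 < R →
      ∀ᶠ n in atTop, Metric.ball (0 : EuclideanSpace ℝ (Fin d)) R ⊆ Λ n) :
    Tendsto
      (fun n => (∫ y in Set.univ.pi (fun _ : Fin (m + 1) => Λ n), I y) /
        (volume (Λ n)).toReal)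
      atTop
      (nhds (∫ v : Fin m → EuclideanSpace ℝ (Fin d), I (Fin.cons 0 v))) :=
  van_hove_thermodynamic_limit_general d m I hImeas htrans C M hM hbound Λ hmeasΛ hbdd hpos hVH
end

section
/- Let u : C → ℂ be infinitely differentiable on an open set C ⊆ E (E a normed space) and w : ℂ → ℂ analytic on a neighborhood of u(C). Then for directions h_1, …, h_n, the iterated directional derivative satisfies the Faà di Bruno formula: ∂_{h_1}⋯∂_{h_n}(w ∘ u) = Σ_{k=1}^n (w^{(k)} ∘ u) Σ_{partitions {I_1,…,I_k} of {1,…,n}} Π_{l=1}^k ∂_{I_l} u, where ∂_{I} u denotes the iterated directional derivative of u in the directions {h_j : j ∈ I}. -/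
open scoped BigOperators

open Finset

lemma orderEmbOfFin_congr {α : Type*} [LinearOrder α] {s t : Finset α} (hst : s = t) {k : ℕ}
    (h : s.card = k) (h' : t.card = k) (j : Fin k) :
    s.orderEmbOfFin h j = t.orderEmbOfFin h' j := by subst hst; rfl

lemma orderEmbOfFin_cast {α : Type*} [LinearOrder α] (s : Finset α) {k k' : ℕ}
    (h : s.card = k) (h' : s.card = k') (j : Fin k) :
    s.orderEmbOfFin h j = s.orderEmbOfFin h' (Fin.cast (h ▸ h') j) := by
  subst h; subst h'; rfl

lemma max'_congr {α : Type*} [LinearOrder α] {s t : Finset α} (hst : s = t)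
    (hs : s.Nonempty) (ht : t.Nonempty) : s.max' hs = t.max' ht := by subst hst; rfl

namespace OrderedFinpartition
variable {n : ℕ} (c : OrderedFinpartition n)

def partF (m : Fin c.length) : Finset (Fin n) := Finset.image (c.emb m) Finset.univ
lemma coe_partF (m : Fin c.length) : (c.partF m : Set (Fin n)) = Set.range (c.emb m) := by
  simp [partF, Finset.coe_image]
lemma partF_nonempty (m : Fin c.length) : (c.partF m).Nonempty :=
  ⟨c.emb m ⟨0, c.partSize_pos m⟩, by simp [partF]⟩
lemma partF_card (m : Fin c.length) : (c.partF m).card = c.partSize m := by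
  rw [partF, Finset.card_image_of_injective _ (c.emb_strictMono m).injective, card_univ,
    Fintype.card_fin]
lemma partF_disjoint {m m' : Fin c.length} (h : m ≠ m') :
    Disjoint (c.partF m) (c.partF m') := by
  rw [← Finset.disjoint_coe, coe_partF, coe_partF]
  exact c.disjoint (Set.mem_univ m) (Set.mem_univ m') h
lemma partF_injective : Function.Injective c.partF := by
  intro m m' hmm
  by_contra hne
  have hd := c.partF_disjoint hne
  rw [hmm, disjoint_self] at hd
  exact absurd (hd ▸ (hmm ▸ c.partF_nonempty m)) (by simp)
lemma emb_eq_orderEmbOfFin (m : Fin c.length) :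
    c.emb m = (c.partF m).orderEmbOfFin (c.partF_card m) :=
  Finset.orderEmbOfFin_unique (c.partF_card m) (fun x => by simp [partF]) (c.emb_strictMono m)
lemma partF_max' (m : Fin c.length) :
    (c.partF m).max' (c.partF_nonempty m)
      = c.emb m ⟨c.partSize m - 1, Nat.sub_one_lt_of_lt (c.partSize_pos m)⟩ := by
  rw [emb_eq_orderEmbOfFin]
  exact (Finset.orderEmbOfFin_last (c.partF_card m) (c.partSize_pos m)).symm
def parts : Finset (Finset (Fin n)) := Finset.image c.partF Finset.univ
lemma mem_parts {b : Finset (Fin n)} : b ∈ c.parts ↔ ∃ m, c.partF m = b := by simp [parts]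
lemma parts_card : c.parts.card = c.length := by
  rw [parts, Finset.card_image_of_injective _ c.partF_injective, card_univ, Fintype.card_fin]

/-- The "max of each part" enumeration. -/
def maxFun : Fin c.length → Fin n := fun m => (c.partF m).max' (c.partF_nonempty m)

lemma maxFun_strictMono : StrictMono c.maxFun := by
  intro a b hab
  unfold maxFun
  rw [partF_max', partF_max']
  exact c.parts_strictMono hab

lemma maxFun_mem (m : Fin c.length) : c.maxFun m ∈ c.partF m :=
  (c.partF m).max'_mem _

/-- extensionality via parts -/
lemma ext_of_partF {c c' : OrderedFinpartition n} (hlen : c.length = c'.length)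
    (hpart : ∀ m, c.partF m = c'.partF (Fin.cast hlen m)) : c = c' := by
  have hps : ∀ m, c.partSize m = c'.partSize (Fin.cast hlen m) := by
    intro m
    rw [← c.partF_card m, ← c'.partF_card _, hpart m]
  have hemb : ∀ m (j : Fin (c.partSize m)),
      c.emb m j = c'.emb (Fin.cast hlen m) (Fin.cast (hps m) j) := by
    intro m j
    rw [c.emb_eq_orderEmbOfFin, c'.emb_eq_orderEmbOfFin]
    rw [orderEmbOfFin_congr (hpart m) (c.partF_card m)
      (by rw [(c'.partF_card _ : _ = c'.partSize (Fin.cast hlen m)), ← hps m]) j]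
    exact orderEmbOfFin_cast _ _ _ j
  -- now destructure
  obtain ⟨L, ps, pos, emb, hsm, hpm, hdj, hcv⟩ := c
  obtain ⟨L', ps', pos', emb', hsm', hpm', hdj', hcv'⟩ := c'
  simp only at hlen hps hemb
  subst hlen
  have hps' : ps = ps' := funext fun m => hps m
  subst hps'
  have hemb' : emb = emb' := funext fun m => funext fun j => hemb m j
  subst hemb'
  rfl

lemma parts_injective {c c' : OrderedFinpartition n} (hcc : c.parts = c'.parts) : c = c' := by
  have hlen : c.length = c'.length := by rw [← parts_card, ← parts_card, hcc]
  -- images of the two max-enumerations agree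
  have himg : Finset.image c.maxFun Finset.univ = Finset.image c'.maxFun Finset.univ := by
    apply Finset.ext
    intro j
    simp only [Finset.mem_image, Finset.mem_univ, true_and]
    constructor
    · rintro ⟨m, rfl⟩
      have : c.partF m ∈ c'.parts := by rw [← hcc, mem_parts]; exact ⟨m, rfl⟩
      obtain ⟨m', hm'⟩ := (mem_parts c').1 this
      exact ⟨m', max'_congr hm' _ _⟩
    · rintro ⟨m, rfl⟩
      have : c'.partF m ∈ c.parts := by rw [hcc, mem_parts]; exact ⟨m, rfl⟩
      obtain ⟨m', hm'⟩ := (mem_parts c).1 this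
      exact ⟨m', max'_congr hm' _ _⟩
  set T := Finset.image c.maxFun Finset.univ with hT
  have hTcard : T.card = c.length := by
    rw [hT, Finset.card_image_of_injective _ c.maxFun_strictMono.injective, card_univ,
      Fintype.card_fin]
  have hTcard' : T.card = c'.length := hTcard.trans hlen
  have e1 : c.maxFun = T.orderEmbOfFin hTcard :=
    Finset.orderEmbOfFin_unique hTcard
      (fun m => Finset.mem_image_of_mem _ (mem_univ m)) c.maxFun_strictMono
  have e2 : c'.maxFun = T.orderEmbOfFin hTcard' :=
    Finset.orderEmbOfFin_unique hTcard'
      (fun m => by rw [himg]; exact Finset.mem_image_of_mem _ (mem_univ m)) c'.maxFun_strictMono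
  have hkey : ∀ m, c.maxFun m = c'.maxFun (Fin.cast hlen m) := by
    intro m
    rw [e1, e2]
    exact orderEmbOfFin_cast _ _ _ m
  apply ext_of_partF hlen
  intro m
  have : c.partF m ∈ c'.parts := by rw [← hcc, mem_parts]; exact ⟨m, rfl⟩
  obtain ⟨m', hm'⟩ := (mem_parts c').1 this
  have hmax : c'.maxFun m' = c'.maxFun (Fin.cast hlen m) := by
    have h1 : c'.maxFun m' = c.maxFun m := max'_congr hm' _ _
    rw [h1, hkey m]
  have : m' = Fin.cast hlen m := c'.maxFun_strictMono.injective hmax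
  rw [← hm', this]

set_option maxHeartbeats 1000000 in
lemma parts_surjective (P : Finset (Finset (Fin n)))
    (hne : ∀ b ∈ P, b.Nonempty)
    (hdisj : ∀ a ∈ P, ∀ b ∈ P, a ≠ b → a ∩ b = ∅)
    (hcov : P.biUnion id = Finset.univ) :
    ∃ c : OrderedFinpartition n, c.parts = P := by
  classical
  -- every element of `Fin n` lies in a unique part
  have huniq : ∀ j : Fin n, ∃! b, b ∈ P ∧ j ∈ b := by
    intro j
    have : j ∈ P.biUnion id := hcov ▸ Finset.mem_univ j
    obtain ⟨b, hbP, hjb⟩ := Finset.mem_biUnion.1 this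
    refine ⟨b, ⟨hbP, hjb⟩, ?_⟩
    rintro b' ⟨hb'P, hjb'⟩
    by_contra hbb
    have hie := hdisj b' hb'P b hbP hbb
    have hj2 : j ∈ b' ∩ b := Finset.mem_inter.2 ⟨hjb', hjb⟩
    rw [hie] at hj2
    exact absurd hj2 (Finset.notMem_empty j)
  -- the set of maxima of the parts
  set M : Finset (Fin n) := P.attach.image (fun b => b.1.max' (hne b.1 b.2)) with hM
  have hmaxinj : ∀ (a b : {x // x ∈ P}),
      a.1.max' (hne a.1 a.2) = b.1.max' (hne b.1 b.2) → a = b := by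
    intro a b hab
    have h1 : a.1.max' (hne a.1 a.2) ∈ a.1 := Finset.max'_mem _ _
    have h2 : a.1.max' (hne a.1 a.2) ∈ b.1 := hab ▸ Finset.max'_mem _ _
    obtain ⟨bb, -, hbu⟩ := huniq (a.1.max' (hne a.1 a.2))
    exact Subtype.ext ((hbu a.1 ⟨a.2, h1⟩).trans (hbu b.1 ⟨b.2, h2⟩).symm)
  have hMcard : M.card = P.card := by
    rw [hM, Finset.card_image_of_injective _ hmaxinj, Finset.card_attach]
  set σ : Fin P.card → Fin n := fun m => M.orderEmbOfFin hMcard m with hσ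
  have hσmono : StrictMono σ := (M.orderEmbOfFin hMcard).strictMono
  have hσM : ∀ m, σ m ∈ M := fun m => Finset.orderEmbOfFin_mem M hMcard m
  -- the part containing σ m
  have hex : ∀ m : Fin P.card, ∃! b, b ∈ P ∧ σ m ∈ b := fun m => huniq (σ m)
  set part : Fin P.card → Finset (Fin n) := fun m => P.choose (fun b => σ m ∈ b) (hex m)
    with hpart
  have hpartP : ∀ m, part m ∈ P := fun m => P.choose_mem _ (hex m)
  have hpartmem : ∀ m, σ m ∈ part m := fun m => P.choose_property _ (hex m)
  have hpartne : ∀ m, (part m).Nonempty := fun m => hne _ (hpartP m)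
  -- the max of `part m` is `σ m`
  have hpartmax : ∀ m, (part m).max' (hpartne m) = σ m := by
    intro m
    obtain ⟨b, hbM⟩ := Finset.mem_image.1 (hσM m)
    obtain ⟨hb1, hb2⟩ := hbM
    -- b.1.max' = σ m, and σ m ∈ b.1, so part m = b.1
    have hmem : σ m ∈ b.1 := hb2 ▸ Finset.max'_mem _ _
    obtain ⟨bb, -, hbu⟩ := huniq (σ m)
    have : part m = b.1 := (hbu (part m) ⟨hpartP m, hpartmem m⟩).trans (hbu b.1 ⟨b.2, hmem⟩).symm
    rw [← hb2]
    exact max'_congr this _ _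
  have hpartinj : Function.Injective part := by
    intro a b hab
    apply hσmono.injective
    rw [← hpartmax a, ← hpartmax b]
    exact max'_congr hab _ _
  refine ⟨⟨P.card, fun m => (part m).card, fun m => Finset.card_pos.2 (hpartne m),
    fun m => (part m).orderEmbOfFin rfl, fun m => ((part m).orderEmbOfFin rfl).strictMono,
    ?_, ?_, ?_⟩, ?_⟩
  · intro a b hab
    simp only
    rw [Finset.orderEmbOfFin_last rfl (Finset.card_pos.2 (hpartne a)),
      Finset.orderEmbOfFin_last rfl (Finset.card_pos.2 (hpartne b)),
      hpartmax a, hpartmax b]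
    exact hσmono hab
  · intro a _ b _ hab
    simp only [Function.onFun, Finset.range_orderEmbOfFin]
    rw [Finset.disjoint_coe, Finset.disjoint_iff_inter_eq_empty]
    exact hdisj _ (hpartP a) _ (hpartP b) (fun hh => hab (hpartinj hh))
  · intro j
    obtain ⟨b, ⟨hbP, hjb⟩, hbu⟩ := huniq j
    have hmaxM : b.max' (hne b hbP) ∈ M := by
      rw [hM]; exact Finset.mem_image.2 ⟨⟨b, hbP⟩, Finset.mem_attach _ _, rfl⟩
    have : b.max' (hne b hbP) ∈ Set.range σ := by
      rw [hσ]
      rw [Finset.range_orderEmbOfFin]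
      exact hmaxM
    obtain ⟨m, hm⟩ := this
    have hbm : part m = b := by
      obtain ⟨bb, -, hbu'⟩ := huniq (σ m)
      exact (hbu' (part m) ⟨hpartP m, hpartmem m⟩).trans
        (hbu' b ⟨hbP, hm ▸ Finset.max'_mem _ _⟩).symm
    refine ⟨m, ?_⟩
    simp only [Finset.range_orderEmbOfFin]
    rw [hbm]
    exact hjb
  · -- parts = P
    apply Finset.eq_of_subset_of_card_le
    · intro b hb
      rw [mem_parts] at hb
      obtain ⟨m, rfl⟩ := hb
      have : partF _ m = part m := by
        apply Finset.coe_injective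
        rw [coe_partF]
        exact Finset.range_orderEmbOfFin _ rfl
      rw [this]
      exact hpartP m
    · rw [parts_card]

end OrderedFinpartition


lemma OrderedFinpartition.parts_mem_partitionsOf {n : ℕ} (c : OrderedFinpartition n) :
    c.parts ∈ partitionsOf (Finset.univ : Finset (Fin n)) := by
  simp only [partitionsOf, Finset.mem_filter, Finset.mem_powerset]
  refine ⟨fun b _ => Finset.mem_powerset.2 (subset_univ b), ?_, ?_, ?_⟩
  · rw [c.mem_parts]
    rintro ⟨m, hm⟩
    exact absurd (hm ▸ c.partF_nonempty m) (by simp)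
  · intro a ha b hb hab
    rw [c.mem_parts] at ha hb
    obtain ⟨ma, rfl⟩ := ha; obtain ⟨mb, rfl⟩ := hb
    have : ma ≠ mb := fun hh => hab (by rw [hh])
    exact Finset.disjoint_iff_inter_eq_empty.1 (c.partF_disjoint this)
  · apply Finset.eq_univ_of_forall
    intro j
    obtain ⟨m, jm⟩ := c.cover j
    exact Finset.mem_biUnion.2 ⟨c.partF m, c.mem_parts.2 ⟨m, rfl⟩, by
      simpa [OrderedFinpartition.partF] using jm⟩

lemma iteratedDerivWithin_of_isOpen' {V : Set ℂ} (hV : IsOpen V) {z : ℂ} (hz : z ∈ V)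
    (k : ℕ) (w : ℂ → ℂ) : iteratedDerivWithin k w V z = iteratedDeriv k w z := by
  simp only [iteratedDerivWithin, iteratedDeriv]
  rw [iteratedFDerivWithin_of_isOpen k hV hz]

lemma iterFD_congr {E : Type*} [NormedAddCommGroup E] [NormedSpace ℝ E] (u : E → ℂ)
    (C : Set E) (x : E) {k k' : ℕ} (hk : k = k') (v : Fin k' → E) :
    iteratedFDerivWithin ℝ k u C x (fun j => v (Fin.cast hk j))
      = iteratedFDerivWithin ℝ k' u C x v := by subst hk; rfl

/-- Faà di Bruno formula in partition form: for `u` smooth on an open set `C`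
and `w` analytic on an open neighborhood of `u(C)`, the iterated directional
derivative of `w ∘ u` in directions `h 1, …, h n` is the sum over partitions
`{I₁, …, I_k}` of `{1,…,n}` of `w⁽ᵏ⁾(u(x))` times the product of the iterated
directional derivatives `∂_{I_l} u (x)`. -/
theorem faa_di_bruno_partition_form {E : Type*} [NormedAddCommGroup E]
    [NormedSpace ℝ E] (C : Set E) (hC : IsOpen C)
    (u : E → ℂ) (hu : ContDiffOn ℝ (⊤ : ℕ∞) u C)
    (V : Set ℂ) (hV : IsOpen V) (w : ℂ → ℂ) (hw : AnalyticOnNhd ℂ w V)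
    (huV : Set.MapsTo u C V) (x : E) (hx : x ∈ C) (n : ℕ) (h : Fin n → E) :
    iteratedFDerivWithin ℝ n (w ∘ u) C x h =
      ∑ P ∈ partitionsOf (Finset.univ : Finset (Fin n)),
        iteratedDeriv P.card w (u x) *
          ∏ b ∈ P, iteratedFDerivWithin ℝ b.card u C x
            (fun j => h (b.orderIsoOfFin rfl j)) := by
  classical
  have hCu : UniqueDiffOn ℝ C := hC.uniqueDiffOn
  have hVu : UniqueDiffOn ℂ V := hV.uniqueDiffOn
  have hwV : ContDiffOn ℂ (⊤ : ℕ∞) w V := hw.contDiffOn hVu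
  have hq : HasFTaylorSeriesUpToOn ((⊤ : ℕ∞) : WithTop ℕ∞) w (ftaylorSeriesWithin ℂ w V) V :=
    hwV.ftaylorSeriesWithin hVu
  have hqR := HasFTaylorSeriesUpToOn.restrictScalars ℝ hq
  have hp : HasFTaylorSeriesUpToOn ((⊤ : ℕ∞) : WithTop ℕ∞) u (ftaylorSeriesWithin ℝ u C) C :=
    hu.ftaylorSeriesWithin hCu
  have hcomp := hqR.comp hp huV
  have hmain := hcomp.eq_iteratedFDerivWithin_of_uniqueDiffOn (m := n)
    (by exact_mod_cast le_top) hCu hx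
  rw [← hmain]
  have hsum : (((ftaylorSeriesWithin ℂ w V (u x)).restrictScalars ℝ).taylorComp
      (ftaylorSeriesWithin ℝ u C x) n) h
      = ∑ c : OrderedFinpartition n,
          iteratedDeriv c.length w (u x)
            * ∏ m : Fin c.length,
                iteratedFDerivWithin ℝ (c.partSize m) u C x (h ∘ c.emb m) := by
    rw [FormalMultilinearSeries.taylorComp]
    rw [ContinuousMultilinearMap.sum_apply]
    apply Finset.sum_congr rfl
    intro c _
    rw [FormalMultilinearSeries.compAlongOrderedFinpartition_apply]
    have h1 : (((ftaylorSeriesWithin ℂ w V (u x)).restrictScalars ℝ) c.length)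
        (c.applyOrderedFinpartition
          (fun m => ftaylorSeriesWithin ℝ u C x (c.partSize m)) h)
        = (iteratedFDerivWithin ℂ c.length w V (u x))
            (c.applyOrderedFinpartition
              (fun m => ftaylorSeriesWithin ℝ u C x (c.partSize m)) h) := rfl
    rw [h1, iteratedFDerivWithin_apply_eq_iteratedDerivWithin_mul_prod,
      iteratedDerivWithin_of_isOpen' hV (huV hx), smul_eq_mul, mul_comm]
    congr 1
  rw [hsum]
  refine Finset.sum_bij (fun c _ => OrderedFinpartition.parts c)
    (fun c _ => c.parts_mem_partitionsOf)
    (fun c _ c' _ hcc => OrderedFinpartition.parts_injective hcc) ?_ ?_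
  · intro P hP
    simp only [partitionsOf, Finset.mem_filter, Finset.mem_powerset] at hP
    obtain ⟨-, hPne, hPdisj, hPcov⟩ := hP
    have hne : ∀ b ∈ P, b.Nonempty := fun b hb =>
      Finset.nonempty_iff_ne_empty.2 (fun hb0 => hPne (hb0 ▸ hb))
    obtain ⟨c, hc⟩ := OrderedFinpartition.parts_surjective P hne hPdisj hPcov
    exact ⟨c, Finset.mem_univ c, hc⟩
  · intro c _
    show _ = iteratedDeriv c.parts.card w (u x) * ∏ b ∈ c.parts, _
    rw [c.parts_card]
    congr 1
    have hpp : c.parts = Finset.image c.partF Finset.univ := rfl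
    rw [hpp, Finset.prod_image (fun a _ b _ hab => c.partF_injective hab)]
    apply Finset.prod_congr rfl
    intro m _
    rw [← iterFD_congr u C x (c.partF_card m) (h ∘ c.emb m)]
    congr 1
    funext j
    simp only [Function.comp]
    congr 1
    rw [Finset.coe_orderIsoOfFin_apply]
    rw [c.emb_eq_orderEmbOfFin]
    exact orderEmbOfFin_cast _ rfl (c.partF_card m) j
end
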